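/- arXiv:math/9811052 — 5 statements merged into one kernel-verified Lean document; each statement's English description precedes it below -/
import Mathlib

section
/- If ω = Σ ωᵢ⊗ωⁱ ∈ A⊗A commutes with the image of the coproduct, Δ(a)ω = ωΔ(a) for all a ∈ A, then c₁ = Σᵢ ωᵢ β S(ωⁱ) is invariant under the adjoint action: Σ a₍₁₎c₁S(a₍₂₎) = ε(a)c₁ for all a ∈ A. -/
open TensorProduct

noncomputable section

namespace QH

variable (K A : Type*) [Field K] [Ring A] [Algebra K A]

/-- multiply the three legs of `A ⊗ (A ⊗ A)` together. -/
def mul3 : A ⊗[K] (A ⊗[K] A) →ₗ[K] A :=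
  (LinearMap.mul' K A).comp
    (TensorProduct.map LinearMap.id (LinearMap.mul' K A))

/-- flip of legs 2 and 3 of `A ⊗ (A ⊗ A)`. -/
def σ23 : A ⊗[K] (A ⊗[K] A) →ₐ[K] A ⊗[K] (A ⊗[K] A) :=
  Algebra.TensorProduct.map (AlgHom.id K A)
    (Algebra.TensorProduct.comm K A A).toAlgHom

/-- flip of legs 1 and 2 of `A ⊗ (A ⊗ A)`. -/
def σ12 : A ⊗[K] (A ⊗[K] A) →ₐ[K] A ⊗[K] (A ⊗[K] A) :=
  (Algebra.TensorProduct.assoc K K K A A A).toAlgHom.comp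
    ((Algebra.TensorProduct.map
        (Algebra.TensorProduct.comm K A A).toAlgHom (AlgHom.id K A)).comp
      (Algebra.TensorProduct.assoc K K K A A A).symm.toAlgHom)

/-- embedding of `A ⊗ A` into legs 1,2 of `A ⊗ (A ⊗ A)`. -/
def leg12 : A ⊗[K] A →ₐ[K] A ⊗[K] (A ⊗[K] A) :=
  Algebra.TensorProduct.map (AlgHom.id K A)
    (Algebra.TensorProduct.includeLeft : A →ₐ[K] A ⊗[K] A)

/-- embedding of `A ⊗ A` into legs 2,3 of `A ⊗ (A ⊗ A)`. -/
def leg23 : A ⊗[K] A →ₐ[K] A ⊗[K] (A ⊗[K] A) :=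
  Algebra.TensorProduct.includeRight

/-- embedding of `A ⊗ A` into legs 1,3 of `A ⊗ (A ⊗ A)`. -/
def leg13 : A ⊗[K] A →ₐ[K] A ⊗[K] (A ⊗[K] A) :=
  Algebra.TensorProduct.map (AlgHom.id K A)
    (Algebra.TensorProduct.includeRight : A →ₐ[K] A ⊗[K] A)

variable {K A} in
/-- `Δ ⊗ 1`, landing in `A ⊗ (A ⊗ A)`. -/
def Δ1 (Δ : A →ₐ[K] A ⊗[K] A) : A ⊗[K] A →ₐ[K] A ⊗[K] (A ⊗[K] A) :=
  (Algebra.TensorProduct.assoc K K K A A A).toAlgHom.comp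
    (Algebra.TensorProduct.map Δ (AlgHom.id K A))

variable {K A} in
/-- `1 ⊗ Δ`. -/
def oneΔ (Δ : A →ₐ[K] A ⊗[K] A) : A ⊗[K] A →ₐ[K] A ⊗[K] (A ⊗[K] A) :=
  Algebra.TensorProduct.map (AlgHom.id K A) Δ

variable {K A} in
/-- for `t = Σ tᵢ ⊗ tⁱ`, this is `Σ tᵢ * b * S tⁱ`. -/
def adE (S : A →ₗ[K] A) (b : A) (t : A ⊗[K] A) : A :=
  (LinearMap.mul' K A)
    ((TensorProduct.map LinearMap.id ((LinearMap.mulLeft K b).comp S)) t)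

variable {K A} in
/-- for `t = Σ tᵢ ⊗ tⁱ`, this is `Σ S(tᵢ) * b * tⁱ`. -/
def antiAdE (S : A →ₗ[K] A) (b : A) (t : A ⊗[K] A) : A :=
  (LinearMap.mul' K A)
    ((TensorProduct.map ((LinearMap.mulRight K b).comp S) LinearMap.id) t)

variable {K A} in
/-- the adjoint action `Ad a · b = Σ a₍₁₎ b S(a₍₂₎)`. -/
def ad (Δ : A →ₐ[K] A ⊗[K] A) (S : A →ₗ[K] A) (a b : A) : A :=
  adE S b (Δ a)

variable {K A} in
/-- the anti-adjoint action `Σ S(a₍₁₎) b a₍₂₎`. -/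
def antiAd (Δ : A →ₐ[K] A ⊗[K] A) (S : A →ₗ[K] A) (a b : A) : A :=
  antiAdE S b (Δ a)

variable {K A} in
/-- `C₁ = Σν X̄ν c S(Ȳν) α Z̄ν`, applied to `Φ⁻¹ = Σ X̄ν ⊗ Ȳν ⊗ Z̄ν`. -/
def C1inv (S : A →ₗ[K] A) (α c : A) (Φ' : A ⊗[K] (A ⊗[K] A)) : A :=
  mul3 K A ((TensorProduct.map LinearMap.id
    (TensorProduct.map
      ((LinearMap.mulLeft K c).comp ((LinearMap.mulRight K α).comp S))
      LinearMap.id)) Φ')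

variable {K A} in
/-- for `Φ = Σ Xν ⊗ Yν ⊗ Zν`, this is `Σν S(Xν) p Yν q S(Zν)`. -/
def sandwich (S : A →ₗ[K] A) (p q : A) (Φ : A ⊗[K] (A ⊗[K] A)) : A :=
  (LinearMap.mul' K A)
    ((TensorProduct.map ((LinearMap.mulRight K p).comp S)
      ((LinearMap.mul' K A).comp
        (TensorProduct.map LinearMap.id ((LinearMap.mulLeft K q).comp S)))) Φ)

variable {K A} in
/-- the twisted coassociator
`Φ_F = (F ⊗ 1)(Δ ⊗ 1)F · Φ · (1 ⊗ Δ)F⁻¹ (1 ⊗ F⁻¹)`. -/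
def twistΦ (Δ : A →ₐ[K] A ⊗[K] A) (Φ : A ⊗[K] (A ⊗[K] A))
    (F F' : A ⊗[K] A) : A ⊗[K] (A ⊗[K] A) :=
  leg12 K A F * Δ1 Δ F * Φ * oneΔ Δ F' * leg23 K A F'

variable {K A} in
/-- the `u`-operator `u = Σ S(Yν β S(Zν)) S(eⁱ) α eᵢ Xν`. -/
def uOp (S : A →ₗ[K] A) (α β : A) (Φ : A ⊗[K] (A ⊗[K] A)) (R : A ⊗[K] A) : A :=
  (LinearMap.mul' K A)
    ((TensorProduct.map
        ((LinearMap.mulRight K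
            ((LinearMap.mul' K A)
              ((TensorProduct.map ((LinearMap.mulRight K α).comp S) LinearMap.id)
                ((TensorProduct.comm K A A) R)))).comp S)
        LinearMap.id)
      ((TensorProduct.comm K A A)
        ((TensorProduct.map LinearMap.id
          ((LinearMap.mul' K A).comp
            (TensorProduct.map LinearMap.id ((LinearMap.mulLeft K β).comp S)))) Φ)))

variable {K A} in
/-- `u⁻¹ = Σ S⁻¹(Xν) S⁻¹(α ēⁱ) ēᵢ Yν β S(Zν)`. -/
def uInvOp (S S' : A →ₗ[K] A) (α β : A) (Φ : A ⊗[K] (A ⊗[K] A))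
    (R' : A ⊗[K] A) : A :=
  (LinearMap.mul' K A)
    ((TensorProduct.map
        ((LinearMap.mulRight K
            ((LinearMap.mul' K A)
              ((TensorProduct.map (S'.comp (LinearMap.mulLeft K α)) LinearMap.id)
                ((TensorProduct.comm K A A) R')))).comp S')
        ((LinearMap.mul' K A).comp
          (TensorProduct.map LinearMap.id ((LinearMap.mulLeft K β).comp S)))) Φ)

variable (W : Type*) [AddCommGroup W] [Module K W] [Module A W]
  [IsScalarTower K A W] [SMulCommClass K A W]

/-- the action `A ⊗[K] W →ₗ[K] W` of `A` on a module `W`. -/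
def actionMap : A ⊗[K] W →ₗ[K] W :=
  TensorProduct.lift
    (LinearMap.mk₂ K (fun a w => a • w)
      (fun a b w => add_smul a b w)
      (fun k a w => smul_assoc k a w)
      (fun a w₁ w₂ => smul_add a w₁ w₂)
      (fun k a w => (smul_comm a k w)))

variable {K A W} in
/-- `y ↦ y • v` as a `K`-linear map `A →ₗ[K] W`. -/
def actOn (v : W) : A →ₗ[K] W :=
  (LinearMap.toSpanSingleton A W v).restrictScalars K

end QH

/-- A quasi-Hopf algebra over a field `K`. -/
structure QuasiHopf (K A : Type*) [Field K] [Ring A] [Algebra K A] where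
  Δ : A →ₐ[K] A ⊗[K] A
  ε : A →ₐ[K] K
  Φ : A ⊗[K] (A ⊗[K] A)
  Φ' : A ⊗[K] (A ⊗[K] A)
  S : A →ₗ[K] A
  α : A
  β : A
  S_one : S 1 = 1
  S_mul : ∀ a b : A, S (a * b) = S b * S a
  Φ_inv : Φ * Φ' = 1
  Φ_inv' : Φ' * Φ = 1
  quasi_coassoc : ∀ a : A,
    Φ * (QH.oneΔ Δ) (Δ a) = (QH.Δ1 Δ) (Δ a) * Φ
  pentagon :
    (Algebra.TensorProduct.assoc K K K A A (A ⊗[K] A))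
        ((Algebra.TensorProduct.map Δ (AlgHom.id K (A ⊗[K] A))) Φ) *
      (Algebra.TensorProduct.map (AlgHom.id K A)
        (Algebra.TensorProduct.map (AlgHom.id K A) Δ)) Φ =
    (Algebra.TensorProduct.map (AlgHom.id K A)
        (Algebra.TensorProduct.map (AlgHom.id K A)
          (Algebra.TensorProduct.includeLeft : A →ₐ[K] A ⊗[K] A))) Φ *
      (Algebra.TensorProduct.map (AlgHom.id K A) (QH.Δ1 Δ)) Φ *
      (Algebra.TensorProduct.includeRight :
        (A ⊗[K] (A ⊗[K] A)) →ₐ[K] A ⊗[K] (A ⊗[K] (A ⊗[K] A))) Φ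
  counit_left : ∀ a : A,
    (Algebra.TensorProduct.lid K A)
      ((Algebra.TensorProduct.map ε (AlgHom.id K A)) (Δ a)) = a
  counit_right : ∀ a : A,
    (Algebra.TensorProduct.rid K K A)
      ((Algebra.TensorProduct.map (AlgHom.id K A) ε) (Δ a)) = a
  counit_Φ : (Algebra.TensorProduct.map (AlgHom.id K A)
      ((Algebra.TensorProduct.lid K A).toAlgHom.comp
        (Algebra.TensorProduct.map ε (AlgHom.id K A)))) Φ = 1
  antipode_α : ∀ a : A, QH.antiAdE S α (Δ a) = ε a • α
  antipode_β : ∀ a : A, QH.adE S β (Δ a) = ε a • β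
  hopf3 : QH.mul3 K A
      ((TensorProduct.map LinearMap.id
        (TensorProduct.map ((LinearMap.mulLeft K β).comp S)
          (LinearMap.mulLeft K α))) Φ') = 1
  hopf4 : QH.sandwich S α β Φ = 1

/-- A quasi-triangular quasi-Hopf algebra. -/
structure QuasiTriangular (K A : Type*) [Field K] [Ring A] [Algebra K A]
    extends QuasiHopf K A where
  R : A ⊗[K] A
  R' : A ⊗[K] A
  R_inv : R * R' = 1
  R_inv' : R' * R = 1
  intertwine : ∀ a : A,
    (Algebra.TensorProduct.comm K A A) (Δ a) * R = R * Δ a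
  hexagon1 : (QH.Δ1 Δ) R =
    QH.σ23 K A (QH.σ12 K A Φ') * QH.leg13 K A R * QH.σ23 K A Φ *
      QH.leg23 K A R * Φ'
  hexagon2 : (QH.oneΔ Δ) R =
    QH.σ12 K A (QH.σ23 K A Φ) * QH.leg13 K A R * QH.σ12 K A Φ' *
      QH.leg12 K A R * Φ

namespace QH

variable {K A : Type*} [Field K] [Ring A] [Algebra K A]

lemma adE_tmul (S : A →ₗ[K] A) (b x y : A) :
    adE S b (x ⊗ₜ[K] y) = x * (b * S y) := by
  simp [adE]

lemma adE_zero_arg (S : A →ₗ[K] A) (b : A) : adE S b (0 : A ⊗[K] A) = 0 := by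
  simp [adE]

lemma adE_add_arg (S : A →ₗ[K] A) (b : A) (s t : A ⊗[K] A) :
    adE S b (s + t) = adE S b s + adE S b t := by
  simp [adE]

lemma adE_add_b (S : A →ₗ[K] A) (b c : A) (t : A ⊗[K] A) :
    adE S (b + c) t = adE S b t + adE S c t := by
  induction t using TensorProduct.induction_on with
  | zero => simp [adE]
  | tmul x y => simp [adE_tmul, mul_add, add_mul]
  | add s t hs ht => simp [adE_add_arg, hs, ht]; abel

lemma adE_smul_b (S : A →ₗ[K] A) (k : K) (b : A) (t : A ⊗[K] A) :
    adE S (k • b) t = k • adE S b t := by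
  induction t using TensorProduct.induction_on with
  | zero => simp [adE]
  | tmul x y => simp [adE_tmul, mul_smul_comm, smul_mul_assoc]
  | add s t hs ht => simp [adE_add_arg, hs, ht]

lemma adE_mul (S : A →ₗ[K] A) (hS : ∀ a b : A, S (a * b) = S b * S a)
    (b : A) (s t : A ⊗[K] A) :
    adE S b (s * t) = adE S (adE S b t) s := by
  induction s using TensorProduct.induction_on with
  | zero => simp [adE]
  | tmul p q =>
    induction t using TensorProduct.induction_on with
    | zero => simp [adE]
    | tmul x y =>
      simp only [Algebra.TensorProduct.tmul_mul_tmul, adE_tmul, hS]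
      noncomm_ring
    | add s t hs ht =>
      rw [mul_add, adE_add_arg, hs, ht, adE_add_arg, adE_add_b]
  | add s s' hs hs' =>
    rw [add_mul, adE_add_arg, hs, hs', adE_add_arg]

end QH

/-- If `ω` commutes with the image of `Δ`, then `c₁ = Σᵢ ωᵢ β S(ωⁱ)` is
adjoint-invariant. -/
theorem statement11 {K A : Type*} [Field K] [Ring A] [Algebra K A] (Q : QuasiHopf K A) (ω : A ⊗[K] A)
    (hω : ∀ a : A, Q.Δ a * ω = ω * Q.Δ a) :
    ∀ a : A, QH.ad Q.Δ Q.S a (QH.adE Q.S Q.β ω) =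
      Q.ε a • QH.adE Q.S Q.β ω := by
  intro a
  have h1 : QH.ad Q.Δ Q.S a (QH.adE Q.S Q.β ω)
      = QH.adE Q.S Q.β (Q.Δ a * ω) := by
    rw [QH.adE_mul Q.S Q.S_mul]
    rfl
  rw [h1, hω, QH.adE_mul Q.S Q.S_mul, Q.antipode_β, QH.adE_smul_b]
end
end

section
/- Let F ∈ A⊗A be a twistor with F = Σ fᵢ⊗fⁱ, F⁻¹ = Σ f̄ᵢ⊗f̄ⁱ. If c₁ is invariant under the adjoint action of (A,Δ) and c₂ is pseudo-invariant, then c₁^F = Σᵢ fᵢ c₁ S(fⁱ) is invariant under the twisted adjoint action (using Δ_F(a) = FΔ(a)F⁻¹), and c₂^F = Σᵢ S(f̄ᵢ) c₂ f̄ⁱ is pseudo-invariant under the twisted structure. -/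
open TensorProduct

noncomputable section

section Aux

variable {K A : Type*} [Field K] [Ring A] [Algebra K A]

lemma adE_tmul (S : A →ₗ[K] A) (b x y : A) :
    QH.adE S b (x ⊗ₜ[K] y) = x * (b * S y) := by
  simp [QH.adE]

lemma antiAdE_tmul (S : A →ₗ[K] A) (b x y : A) :
    QH.antiAdE S b (x ⊗ₜ[K] y) = S x * b * y := by
  simp [QH.antiAdE]

lemma adE_zero (S : A →ₗ[K] A) (b : A) : QH.adE S b 0 = 0 := by
  simp [QH.adE]

lemma adE_addt (S : A →ₗ[K] A) (b : A) (t t' : A ⊗[K] A) :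
    QH.adE S b (t + t') = QH.adE S b t + QH.adE S b t' := by
  simp [QH.adE]

lemma antiAdE_zero (S : A →ₗ[K] A) (b : A) : QH.antiAdE S b 0 = 0 := by
  simp [QH.antiAdE]

lemma antiAdE_addt (S : A →ₗ[K] A) (b : A) (t t' : A ⊗[K] A) :
    QH.antiAdE S b (t + t') = QH.antiAdE S b t + QH.antiAdE S b t' := by
  simp [QH.antiAdE]

lemma adE_add (S : A →ₗ[K] A) (b b' : A) (t : A ⊗[K] A) :
    QH.adE S (b + b') t = QH.adE S b t + QH.adE S b' t := by
  induction t with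
  | zero => simp [adE_zero]
  | tmul x y => simp [adE_tmul, mul_add, add_mul]
  | add u v hu hv => simp [adE_addt, hu, hv]; abel

lemma adE_smul (S : A →ₗ[K] A) (k : K) (b : A) (t : A ⊗[K] A) :
    QH.adE S (k • b) t = k • QH.adE S b t := by
  induction t with
  | zero => simp [adE_zero]
  | tmul x y => simp [adE_tmul, Algebra.mul_smul_comm, Algebra.smul_mul_assoc]
  | add u v hu hv => simp [adE_addt, hu, hv]

lemma antiAdE_add (S : A →ₗ[K] A) (b b' : A) (t : A ⊗[K] A) :
    QH.antiAdE S (b + b') t = QH.antiAdE S b t + QH.antiAdE S b' t := by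
  induction t with
  | zero => simp [antiAdE_zero]
  | tmul x y => simp [antiAdE_tmul, mul_add, add_mul]
  | add u v hu hv => simp [antiAdE_addt, hu, hv]; abel

lemma antiAdE_smul (S : A →ₗ[K] A) (k : K) (b : A) (t : A ⊗[K] A) :
    QH.antiAdE S (k • b) t = k • QH.antiAdE S b t := by
  induction t with
  | zero => simp [antiAdE_zero]
  | tmul x y => simp [antiAdE_tmul, Algebra.mul_smul_comm, Algebra.smul_mul_assoc]
  | add u v hu hv => simp [antiAdE_addt, hu, hv]

lemma adE_one (S : A →ₗ[K] A) (hS1 : S 1 = 1) (b : A) :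
    QH.adE S b 1 = b := by
  rw [Algebra.TensorProduct.one_def, adE_tmul, hS1, mul_one, one_mul]

lemma antiAdE_one (S : A →ₗ[K] A) (hS1 : S 1 = 1) (b : A) :
    QH.antiAdE S b 1 = b := by
  rw [Algebra.TensorProduct.one_def, antiAdE_tmul, hS1, mul_one, one_mul]

lemma adE_mul (S : A →ₗ[K] A) (hS : ∀ a b : A, S (a * b) = S b * S a)
    (b : A) (t s : A ⊗[K] A) :
    QH.adE S b (t * s) = QH.adE S (QH.adE S b s) t := by
  induction t with
  | zero => simp [adE_zero]
  | tmul x y =>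
    induction s with
    | zero => simp [adE_zero, adE_tmul]
    | tmul u v =>
      rw [Algebra.TensorProduct.tmul_mul_tmul, adE_tmul, adE_tmul, adE_tmul, hS]
      noncomm_ring
    | add u v hu hv => rw [mul_add, adE_addt, hu, hv, adE_addt, adE_add]
  | add u v hu hv => rw [add_mul, adE_addt, hu, hv, adE_addt]

lemma antiAdE_mul (S : A →ₗ[K] A) (hS : ∀ a b : A, S (a * b) = S b * S a)
    (b : A) (t s : A ⊗[K] A) :
    QH.antiAdE S b (t * s) = QH.antiAdE S (QH.antiAdE S b t) s := by
  induction s with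
  | zero => simp [antiAdE_zero]
  | tmul x y =>
    induction t with
    | zero => simp [antiAdE_zero, antiAdE_tmul]
    | tmul u v =>
      rw [Algebra.TensorProduct.tmul_mul_tmul, antiAdE_tmul, antiAdE_tmul,
        antiAdE_tmul, hS]
      noncomm_ring
    | add u v hu hv => rw [add_mul, antiAdE_addt, hu, hv, antiAdE_addt, antiAdE_add]
  | add u v hu hv => rw [mul_add, antiAdE_addt, hu, hv, antiAdE_addt]

end Aux

/-- If `c₁` is invariant and `c₂` pseudo-invariant, then `c₁ᶠ = Σ fᵢ c₁ S(fⁱ)`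
is invariant and `c₂ᶠ = Σ S(f̄ᵢ) c₂ f̄ⁱ` pseudo-invariant for the twisted
coproduct `Δ_F(a) = FΔ(a)F⁻¹`. -/
theorem statement13 {K A : Type*} [Field K] [Ring A] [Algebra K A] (Q : QuasiHopf K A) (F F' : A ⊗[K] A)
    (hFF' : F * F' = 1) (hF'F : F' * F = 1)
    (hεF : (Algebra.TensorProduct.lid K A)
      ((Algebra.TensorProduct.map Q.ε (AlgHom.id K A)) F) = 1)
    (hFε : (Algebra.TensorProduct.rid K K A)
      ((Algebra.TensorProduct.map (AlgHom.id K A) Q.ε) F) = 1)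
    (c₁ c₂ : A)
    (hc₁ : ∀ a : A, QH.ad Q.Δ Q.S a c₁ = Q.ε a • c₁)
    (hc₂ : ∀ a : A, QH.antiAd Q.Δ Q.S a c₂ = Q.ε a • c₂) :
    (∀ a : A, QH.adE Q.S (QH.adE Q.S c₁ F) (F * Q.Δ a * F') =
      Q.ε a • QH.adE Q.S c₁ F) ∧
    (∀ a : A, QH.antiAdE Q.S (QH.antiAdE Q.S c₂ F') (F * Q.Δ a * F') =
      Q.ε a • QH.antiAdE Q.S c₂ F') := by
  constructor
  · intro a
    rw [mul_assoc, adE_mul Q.S Q.S_mul, adE_mul Q.S Q.S_mul,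
      ← adE_mul Q.S Q.S_mul c₁ F' F, hF'F, adE_one Q.S Q.S_one]
    have : QH.adE Q.S c₁ (Q.Δ a) = Q.ε a • c₁ := hc₁ a
    rw [this, adE_smul]
  · intro a
    rw [mul_assoc, antiAdE_mul Q.S Q.S_mul, antiAdE_mul Q.S Q.S_mul,
      ← antiAdE_mul Q.S Q.S_mul c₂ F' F, hF'F, antiAdE_one Q.S Q.S_one]
    have : QH.antiAdE Q.S c₂ (Q.Δ a) = Q.ε a • c₂ := hc₂ a
    rw [this, antiAdE_smul]
end
end

section
/- The central element C₁ is invariant under twisting: if c₁ is adjoint-invariant and C₁ = Σν S(Xν)α Yν c₁ S(Zν), then the corresponding element built from the twisted structure, C₁^F = Σν S(X^F_ν) α_F Y^F_ν c₁^F S(Z^F_ν) with Φ_F = Σ X^F_ν⊗Y^F_ν⊗Z^F_ν, α_F = Σ S(f̄ᵢ)αf̄ⁱ, and c₁^F = Σ fᵢc₁S(fⁱ), equals C₁. -/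
open TensorProduct

noncomputable section

namespace QH14

open QH

variable {K A : Type*} [Field K] [Ring A] [Algebra K A]

lemma sandwich_tmul (S : A →ₗ[K] A) (p q x y z : A) :
    QH.sandwich S p q (x ⊗ₜ[K] (y ⊗ₜ[K] z)) = (S x * p) * (y * (q * S z)) := by
  simp [QH.sandwich]

lemma sandwich_add (S : A →ₗ[K] A) (p q : A) (a b : A ⊗[K] (A ⊗[K] A)) :
    QH.sandwich S p q (a + b) = QH.sandwich S p q a + QH.sandwich S p q b := by
  simp [QH.sandwich]

lemma sandwich_zero (S : A →ₗ[K] A) (p q : A) :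
    QH.sandwich S p q (0 : A ⊗[K] (A ⊗[K] A)) = 0 := by simp [QH.sandwich]

lemma sandwich_smul (S : A →ₗ[K] A) (p q : A) (k : K)
    (Ψ : A ⊗[K] (A ⊗[K] A)) :
    QH.sandwich S p q (k • Ψ) = k • QH.sandwich S p q Ψ := by
  simp [QH.sandwich]

lemma adE_tmul (S : A →ₗ[K] A) (q t t' : A) :
    QH.adE S q (t ⊗ₜ[K] t') = t * (q * S t') := by simp [QH.adE]

lemma antiAdE_tmul (S : A →ₗ[K] A) (q t t' : A) :
    QH.antiAdE S q (t ⊗ₜ[K] t') = (S t * q) * t' := by simp [QH.antiAdE]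

lemma adE_add (S : A →ₗ[K] A) (q : A) (a b : A ⊗[K] A) :
    QH.adE S q (a + b) = QH.adE S q a + QH.adE S q b := by simp [QH.adE]

lemma adE_zero (S : A →ₗ[K] A) (q : A) : QH.adE S q (0 : A ⊗[K] A) = 0 := by
  simp [QH.adE]

lemma antiAdE_add (S : A →ₗ[K] A) (q : A) (a b : A ⊗[K] A) :
    QH.antiAdE S q (a + b) = QH.antiAdE S q a + QH.antiAdE S q b := by
  simp [QH.antiAdE]

lemma antiAdE_zero (S : A →ₗ[K] A) (q : A) :
    QH.antiAdE S q (0 : A ⊗[K] A) = 0 := by simp [QH.antiAdE]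

lemma triple_ind {P : A ⊗[K] (A ⊗[K] A) → Prop}
    (zero : P 0) (tmul : ∀ x y z : A, P (x ⊗ₜ[K] (y ⊗ₜ[K] z)))
    (add : ∀ a b, P a → P b → P (a + b)) : ∀ t, P t := by
  intro t
  induction t using TensorProduct.induction_on with
  | zero => exact zero
  | add a b ha hb => exact add a b ha hb
  | tmul x w =>
    induction w using TensorProduct.induction_on with
    | zero => simpa using zero
    | tmul y z => exact tmul x y z
    | add a b ha hb =>
      rw [TensorProduct.tmul_add]
      exact add _ _ ha hb

lemma sandwich_q_zero (S : A →ₗ[K] A) (p : A) (Ψ : A ⊗[K] (A ⊗[K] A)) :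
    QH.sandwich S p 0 Ψ = 0 := by
  induction Ψ using triple_ind with
  | zero => exact sandwich_zero S p 0
  | tmul x y z => simp [sandwich_tmul]
  | add a b ha hb => rw [sandwich_add, ha, hb, add_zero]

lemma sandwich_q_add (S : A →ₗ[K] A) (p q q' : A) (Ψ : A ⊗[K] (A ⊗[K] A)) :
    QH.sandwich S p (q + q') Ψ = QH.sandwich S p q Ψ + QH.sandwich S p q' Ψ := by
  induction Ψ using triple_ind with
  | zero => simp [sandwich_zero]
  | tmul x y z => simp [sandwich_tmul, mul_add, add_mul]
  | add a b ha hb =>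
    rw [sandwich_add, sandwich_add, sandwich_add, ha, hb]
    abel

lemma sandwich_p_zero (S : A →ₗ[K] A) (q : A) (Ψ : A ⊗[K] (A ⊗[K] A)) :
    QH.sandwich S 0 q Ψ = 0 := by
  induction Ψ using triple_ind with
  | zero => exact sandwich_zero S 0 q
  | tmul x y z => simp [sandwich_tmul]
  | add a b ha hb => rw [sandwich_add, ha, hb, add_zero]

lemma sandwich_p_add (S : A →ₗ[K] A) (p p' q : A) (Ψ : A ⊗[K] (A ⊗[K] A)) :
    QH.sandwich S (p + p') q Ψ = QH.sandwich S p q Ψ + QH.sandwich S p' q Ψ := by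
  induction Ψ using triple_ind with
  | zero => simp [sandwich_zero]
  | tmul x y z => simp [sandwich_tmul, mul_add, add_mul]
  | add a b ha hb =>
    rw [sandwich_add, sandwich_add, sandwich_add, ha, hb]
    abel

lemma adE_q_zero (S : A →ₗ[K] A) (T : A ⊗[K] A) : QH.adE S 0 T = 0 := by
  induction T using TensorProduct.induction_on with
  | zero => exact adE_zero S 0
  | tmul t t' => simp [adE_tmul]
  | add a b ha hb => rw [adE_add, ha, hb, add_zero]

lemma adE_q_add (S : A →ₗ[K] A) (q q' : A) (T : A ⊗[K] A) :
    QH.adE S (q + q') T = QH.adE S q T + QH.adE S q' T := by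
  induction T using TensorProduct.induction_on with
  | zero => simp [adE_zero]
  | tmul t t' => simp [adE_tmul, mul_add, add_mul]
  | add a b ha hb => rw [adE_add, adE_add, adE_add, ha, hb]; abel

lemma antiAdE_q_zero (S : A →ₗ[K] A) (T : A ⊗[K] A) : QH.antiAdE S 0 T = 0 := by
  induction T using TensorProduct.induction_on with
  | zero => exact antiAdE_zero S 0
  | tmul t t' => simp [antiAdE_tmul]
  | add a b ha hb => rw [antiAdE_add, ha, hb, add_zero]

lemma antiAdE_q_add (S : A →ₗ[K] A) (q q' : A) (T : A ⊗[K] A) :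
    QH.antiAdE S (q + q') T = QH.antiAdE S q T + QH.antiAdE S q' T := by
  induction T using TensorProduct.induction_on with
  | zero => simp [antiAdE_zero]
  | tmul t t' => simp [antiAdE_tmul, mul_add, add_mul]
  | add a b ha hb => rw [antiAdE_add, antiAdE_add, antiAdE_add, ha, hb]; abel

lemma adE_one (S : A →ₗ[K] A) (hS1 : S 1 = 1) (q : A) :
    QH.adE S q (1 : A ⊗[K] A) = q := by
  rw [Algebra.TensorProduct.one_def, adE_tmul, hS1, mul_one, one_mul]

lemma antiAdE_one (S : A →ₗ[K] A) (hS1 : S 1 = 1) (q : A) :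
    QH.antiAdE S q (1 : A ⊗[K] A) = q := by
  rw [Algebra.TensorProduct.one_def, antiAdE_tmul, hS1, mul_one, one_mul]

lemma L2 (S : A →ₗ[K] A) (hS : ∀ a b : A, S (a * b) = S b * S a) (q : A)
    (T T' : A ⊗[K] A) :
    QH.adE S (QH.adE S q T) T' = QH.adE S q (T' * T) := by
  induction T' using TensorProduct.induction_on with
  | zero => simp [adE_zero]
  | add a b ha hb => rw [adE_add, ha, hb, add_mul, adE_add]
  | tmul u u' =>
    induction T using TensorProduct.induction_on with
    | zero => simp [adE_zero, adE_q_zero]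
    | add a b ha hb => rw [adE_add, adE_q_add, ha, hb, mul_add, adE_add]
    | tmul t t' =>
      rw [adE_tmul, adE_tmul, Algebra.TensorProduct.tmul_mul_tmul, adE_tmul,
        hS]
      simp [mul_assoc]

lemma L5 (S : A →ₗ[K] A) (hS : ∀ a b : A, S (a * b) = S b * S a) (q : A)
    (T T' : A ⊗[K] A) :
    QH.antiAdE S (QH.antiAdE S q T') T = QH.antiAdE S q (T' * T) := by
  induction T using TensorProduct.induction_on with
  | zero => simp [antiAdE_zero]
  | add a b ha hb => rw [antiAdE_add, ha, hb, mul_add, antiAdE_add]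
  | tmul e e' =>
    induction T' using TensorProduct.induction_on with
    | zero => simp [antiAdE_zero, antiAdE_q_zero]
    | add a b ha hb => rw [antiAdE_add, antiAdE_q_add, ha, hb, add_mul, antiAdE_add]
    | tmul k k' =>
      rw [antiAdE_tmul, antiAdE_tmul, Algebra.TensorProduct.tmul_mul_tmul,
        antiAdE_tmul, hS]
      simp [mul_assoc]

lemma L1 (S : A →ₗ[K] A) (hS : ∀ a b : A, S (a * b) = S b * S a)
    (hS1 : S 1 = 1) (p q : A)
    (T : A ⊗[K] A) (Ψ : A ⊗[K] (A ⊗[K] A)) :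
    QH.sandwich S p q (Ψ * QH.leg23 K A T) = QH.sandwich S p (QH.adE S q T) Ψ := by
  induction T using TensorProduct.induction_on with
  | zero => rw [map_zero, mul_zero, sandwich_zero, adE_zero, sandwich_q_zero]
  | add a b ha hb =>
    rw [map_add, mul_add, sandwich_add, ha, hb, adE_add, sandwich_q_add]
  | tmul t t' =>
    induction Ψ using triple_ind with
    | zero => rw [zero_mul, sandwich_zero, sandwich_zero]
    | add a b ha hb => rw [add_mul, sandwich_add, ha, hb, sandwich_add]
    | tmul x y z =>
      have : QH.leg23 K A (t ⊗ₜ[K] t') = (1 : A) ⊗ₜ[K] (t ⊗ₜ[K] t') := by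
        simp [QH.leg23]
      rw [this, Algebra.TensorProduct.tmul_mul_tmul,
        Algebra.TensorProduct.tmul_mul_tmul, sandwich_tmul, sandwich_tmul,
        adE_tmul]
      simp [hS, hS1, mul_assoc, mul_one, one_mul]

lemma L4 (S : A →ₗ[K] A) (hS : ∀ a b : A, S (a * b) = S b * S a)
    (hS1 : S 1 = 1) (p q : A)
    (T : A ⊗[K] A) (Ψ : A ⊗[K] (A ⊗[K] A)) :
    QH.sandwich S p q (QH.leg12 K A T * Ψ) =
      QH.sandwich S (QH.antiAdE S p T) q Ψ := by
  induction T using TensorProduct.induction_on with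
  | zero => rw [map_zero, zero_mul, sandwich_zero, antiAdE_zero, sandwich_p_zero]
  | add a b ha hb =>
    rw [map_add, add_mul, sandwich_add, ha, hb, antiAdE_add, sandwich_p_add]
  | tmul e e' =>
    induction Ψ using triple_ind with
    | zero => rw [mul_zero, sandwich_zero, sandwich_zero]
    | add a b ha hb => rw [mul_add, sandwich_add, ha, hb, sandwich_add]
    | tmul x y z =>
      have : QH.leg12 K A (e ⊗ₜ[K] e') = e ⊗ₜ[K] (e' ⊗ₜ[K] (1 : A)) := by
        simp [QH.leg12]
      rw [this, Algebra.TensorProduct.tmul_mul_tmul,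
        Algebra.TensorProduct.tmul_mul_tmul, sandwich_tmul, sandwich_tmul,
        antiAdE_tmul]
      simp [hS, hS1, mul_assoc, mul_one, one_mul]

lemma L3 (Δ : A →ₐ[K] A ⊗[K] A) (ε : A →ₐ[K] K) (S : A →ₗ[K] A)
    (hS : ∀ a b : A, S (a * b) = S b * S a) (p c : A)
    (hc : ∀ a : A, QH.adE S c (Δ a) = ε a • c)
    (T : A ⊗[K] A) (Ψ : A ⊗[K] (A ⊗[K] A)) :
    QH.sandwich S p c (Ψ * QH.oneΔ Δ T) =
      QH.sandwich S p c (Ψ *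
        (((Algebra.TensorProduct.rid K K A)
            ((Algebra.TensorProduct.map (AlgHom.id K A) ε) T)) ⊗ₜ[K]
          ((1 : A) ⊗ₜ[K] (1 : A)))) := by
  induction T using TensorProduct.induction_on with
  | zero => rw [map_zero, mul_zero, sandwich_zero, map_zero, map_zero,
      TensorProduct.zero_tmul, mul_zero, sandwich_zero]
  | add a b ha hb =>
    rw [map_add, mul_add, sandwich_add, ha, hb, map_add, map_add,
      TensorProduct.add_tmul, mul_add, sandwich_add]
  | tmul g g' =>
    induction Ψ using triple_ind with
    | zero => rw [zero_mul, sandwich_zero, zero_mul, sandwich_zero]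
    | add a b ha hb => rw [add_mul, sandwich_add, ha, hb, add_mul, sandwich_add]
    | tmul x y z =>
      have hone : QH.oneΔ Δ (g ⊗ₜ[K] g') = g ⊗ₜ[K] (Δ g') := by
        simp [QH.oneΔ]
      have key : ∀ d : A ⊗[K] A,
          QH.sandwich S p c ((x ⊗ₜ[K] (y ⊗ₜ[K] z)) * (g ⊗ₜ[K] d)) =
            (S (x * g) * p) * (y * (QH.adE S c d * S z)) := by
        intro d
        induction d using TensorProduct.induction_on with
        | zero => rw [TensorProduct.tmul_zero, mul_zero, sandwich_zero,
            adE_zero, zero_mul, mul_zero, mul_zero]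
        | add a b ha hb =>
          rw [TensorProduct.tmul_add, mul_add, sandwich_add, ha, hb, adE_add,
            add_mul, mul_add, mul_add]
        | tmul u u' =>
          rw [Algebra.TensorProduct.tmul_mul_tmul,
            Algebra.TensorProduct.tmul_mul_tmul, sandwich_tmul, adE_tmul]
          simp [hS, mul_assoc]
      rw [hone, key, hc g']
      have hrid : (Algebra.TensorProduct.rid K K A)
          ((Algebra.TensorProduct.map (AlgHom.id K A) ε) (g ⊗ₜ[K] g')) =
          ε g' • g := by
        simp [Algebra.TensorProduct.rid_tmul]
      rw [hrid, ← TensorProduct.smul_tmul', mul_smul_comm, sandwich_smul,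
        Algebra.TensorProduct.tmul_mul_tmul,
        Algebra.TensorProduct.tmul_mul_tmul, sandwich_tmul]
      simp [mul_one, mul_smul_comm, smul_mul_assoc, mul_assoc]

lemma L6 (Δ : A →ₐ[K] A ⊗[K] A) (ε : A →ₐ[K] K) (S : A →ₗ[K] A)
    (hS : ∀ a b : A, S (a * b) = S b * S a) (α c : A)
    (hα : ∀ a : A, QH.antiAdE S α (Δ a) = ε a • α)
    (T : A ⊗[K] A) (Ψ : A ⊗[K] (A ⊗[K] A)) :
    QH.sandwich S α c (QH.Δ1 Δ T * Ψ) =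
      QH.sandwich S α c
        (((1 : A) ⊗ₜ[K] ((1 : A) ⊗ₜ[K]
          ((Algebra.TensorProduct.lid K A)
            ((Algebra.TensorProduct.map ε (AlgHom.id K A)) T)))) * Ψ) := by
  induction T using TensorProduct.induction_on with
  | zero => rw [map_zero, zero_mul, sandwich_zero, map_zero, map_zero,
      TensorProduct.tmul_zero, TensorProduct.tmul_zero, zero_mul, sandwich_zero]
  | add a b ha hb =>
    rw [map_add, add_mul, sandwich_add, ha, hb, map_add, map_add,
      TensorProduct.tmul_add, TensorProduct.tmul_add, add_mul, sandwich_add]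
  | tmul f f' =>
    induction Ψ using triple_ind with
    | zero => rw [mul_zero, sandwich_zero, mul_zero, sandwich_zero]
    | add a b ha hb => rw [mul_add, sandwich_add, ha, hb, mul_add, sandwich_add]
    | tmul x y z =>
      have hΔ1 : QH.Δ1 Δ (f ⊗ₜ[K] f') =
          (Algebra.TensorProduct.assoc K K K A A A) ((Δ f) ⊗ₜ[K] f') := by
        simp [QH.Δ1]
      have key : ∀ d : A ⊗[K] A,
          QH.sandwich S α c
              ((Algebra.TensorProduct.assoc K K K A A A) (d ⊗ₜ[K] f') *
                (x ⊗ₜ[K] (y ⊗ₜ[K] z))) =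
            (S x * QH.antiAdE S α d) * (y * (c * (S z * S f'))) := by
        intro d
        induction d using TensorProduct.induction_on with
        | zero => rw [TensorProduct.zero_tmul, map_zero, zero_mul,
            sandwich_zero, antiAdE_zero, mul_zero, zero_mul]
        | add a b ha hb =>
          rw [TensorProduct.add_tmul, map_add, add_mul, sandwich_add, ha, hb,
            antiAdE_add, mul_add, add_mul]
        | tmul d₁ d₂ =>
          rw [Algebra.TensorProduct.assoc_tmul,
            Algebra.TensorProduct.tmul_mul_tmul,
            Algebra.TensorProduct.tmul_mul_tmul, sandwich_tmul, antiAdE_tmul,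
            hS, hS]
          simp [mul_assoc]
      rw [hΔ1, key, hα f]
      have hlid : (Algebra.TensorProduct.lid K A)
          ((Algebra.TensorProduct.map ε (AlgHom.id K A)) (f ⊗ₜ[K] f')) =
          ε f • f' := by
        simp [Algebra.TensorProduct.lid_tmul]
      rw [hlid, TensorProduct.tmul_smul, TensorProduct.tmul_smul,
        smul_mul_assoc, sandwich_smul, Algebra.TensorProduct.tmul_mul_tmul,
        Algebra.TensorProduct.tmul_mul_tmul, sandwich_tmul]
      simp [hS, one_mul, mul_one, mul_smul_comm, smul_mul_assoc, mul_assoc]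

end QH14

/-- The central element `C₁ = Σν S(Xν) α Yν c₁ S(Zν)` is invariant under
twisting: the element built in the same way from the twisted data
`(Φ_F, α_F, c₁ᶠ)` equals `C₁`. -/
theorem statement14 {K A : Type*} [Field K] [Ring A] [Algebra K A] (Q : QuasiHopf K A) (F F' : A ⊗[K] A)
    (hFF' : F * F' = 1) (hF'F : F' * F = 1)
    (hεF : (Algebra.TensorProduct.lid K A)
      ((Algebra.TensorProduct.map Q.ε (AlgHom.id K A)) F) = 1)
    (hFε : (Algebra.TensorProduct.rid K K A)
      ((Algebra.TensorProduct.map (AlgHom.id K A) Q.ε) F) = 1)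
    (c₁ : A) (hc₁ : ∀ a : A, QH.ad Q.Δ Q.S a c₁ = Q.ε a • c₁) :
    QH.sandwich Q.S (QH.antiAdE Q.S Q.α F') (QH.adE Q.S c₁ F)
        (QH.twistΦ Q.Δ Q.Φ F F') =
      QH.sandwich Q.S Q.α c₁ Q.Φ := by
  classical
  have hS := Q.S_mul
  have hS1 := Q.S_one
  -- (1 ⊗ ε) F' = 1
  have hF'ε : (Algebra.TensorProduct.rid K K A)
      ((Algebra.TensorProduct.map (AlgHom.id K A) Q.ε) F') = 1 := by
    set φ : (A ⊗[K] A) →ₐ[K] A :=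
      (Algebra.TensorProduct.rid K K A).toAlgHom.comp
        (Algebra.TensorProduct.map (AlgHom.id K A) Q.ε) with hφ
    have hφF : φ F = 1 := hFε
    have : φ F' = φ F * φ F' := by rw [hφF, one_mul]
    calc φ F' = φ (F * F') := by rw [this, map_mul]
      _ = 1 := by rw [hFF', map_one]
  have hc : ∀ a : A, QH.adE Q.S c₁ (Q.Δ a) = Q.ε a • c₁ := hc₁
  rw [QH.twistΦ]
  rw [QH14.L1 Q.S hS hS1 _ _ F' _]
  rw [QH14.L2 Q.S hS c₁ F F', hF'F, QH14.adE_one Q.S hS1]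
  rw [QH14.L3 Q.Δ Q.ε Q.S hS _ c₁ hc F' _]
  rw [hF'ε]
  rw [show ((1 : A) ⊗ₜ[K] ((1 : A) ⊗ₜ[K] (1 : A)))
      = (1 : A ⊗[K] (A ⊗[K] A)) by
    rw [Algebra.TensorProduct.one_def, Algebra.TensorProduct.one_def]]
  rw [mul_one, mul_assoc]
  rw [QH14.L4 Q.S hS hS1 _ c₁ F _]
  rw [QH14.L5 Q.S hS Q.α F F', hF'F, QH14.antiAdE_one Q.S hS1]
  rw [QH14.L6 Q.Δ Q.ε Q.S hS Q.α c₁ Q.antipode_α F Q.Φ]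
  rw [hεF]
  rw [show ((1 : A) ⊗ₜ[K] ((1 : A) ⊗ₜ[K] (1 : A)))
      = (1 : A ⊗[K] (A ⊗[K] A)) by
    rw [Algebra.TensorProduct.one_def, Algebra.TensorProduct.one_def]]
  rw [one_mul]
end
end

section
/- In a quasi-triangular quasi-Hopf algebra, the u-operator satisfies S(α)u = Σᵢ S(eⁱ) α eᵢ, where R = Σ eᵢ⊗eⁱ; i.e. S(α)u = m·(S⊗α)R^T. -/
open TensorProduct

noncomputable section

namespace S17

set_option maxHeartbeats 1000000
set_option synthInstance.maxHeartbeats 400000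
set_option maxRecDepth 8000

open TensorProduct LinearMap

variable {K A : Type*} [Field K] [Ring A] [Algebra K A]

/-- `θ t = Σ S(t²) α t¹`. -/
def th (Q : QuasiTriangular K A) : A ⊗[K] A →ₗ[K] A :=
  (LinearMap.mul' K A) ∘ₗ
    (TensorProduct.map ((LinearMap.mulRight K Q.α).comp Q.S) LinearMap.id) ∘ₗ
      (TensorProduct.comm K A A).toLinearMap

@[simp] lemma th_tmul (Q : QuasiTriangular K A) (x y : A) :
    th Q (x ⊗ₜ[K] y) = Q.S y * Q.α * x := by
  simp [th]

/-- `aAd t = Σ S(t¹) α t²`. -/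
def aAd (Q : QuasiTriangular K A) : A ⊗[K] A →ₗ[K] A :=
  (LinearMap.mul' K A) ∘ₗ
    (TensorProduct.map ((LinearMap.mulRight K Q.α).comp Q.S) LinearMap.id)

@[simp] lemma aAd_tmul (Q : QuasiTriangular K A) (x y : A) :
    aAd Q (x ⊗ₜ[K] y) = Q.S x * Q.α * y := by
  simp [aAd]

/-- `mbs t = Σ t¹ * (β * S t²)`. -/
def mbs (Q : QuasiTriangular K A) : A ⊗[K] A →ₗ[K] A :=
  (LinearMap.mul' K A).comp
    (TensorProduct.map LinearMap.id ((LinearMap.mulLeft K Q.β).comp Q.S))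

@[simp] lemma mbs_tmul (Q : QuasiTriangular K A) (x y : A) :
    mbs Q (x ⊗ₜ[K] y) = x * (Q.β * Q.S y) := by
  simp [mbs]

/-- the element `p = Σ X ⊗ Y β S(Z)`. -/
def pel (Q : QuasiTriangular K A) : A ⊗[K] A :=
  (TensorProduct.map LinearMap.id (mbs Q)) Q.Φ

lemma aAd_dd (Q : QuasiTriangular K A) (a : A) : aAd Q (Q.Δ a) = Q.ε a • Q.α :=
  Q.antipode_α a

lemma mbs_dd (Q : QuasiTriangular K A) (a : A) : mbs Q (Q.Δ a) = Q.ε a • Q.β :=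
  Q.antipode_β a

lemma uop_eq (Q : QuasiTriangular K A) :
    QH.uOp Q.S Q.α Q.β Q.Φ Q.R = th Q (Q.R * pel Q) := by
  have key : ∀ r t : A ⊗[K] A,
      (LinearMap.mul' K A)
        ((TensorProduct.map ((LinearMap.mulRight K (th Q r)).comp Q.S) LinearMap.id)
          ((TensorProduct.comm K A A) t)) = th Q (r * t) := by
    intro r t
    induction t using TensorProduct.induction_on with
    | zero => simp
    | tmul x y =>
        simp only [TensorProduct.comm_tmul, TensorProduct.map_tmul, LinearMap.coe_comp,
          Function.comp_apply, LinearMap.mulRight_apply, LinearMap.id_coe, id_eq,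
          LinearMap.mul'_apply]
        induction r using TensorProduct.induction_on with
        | zero => simp
        | tmul a b =>
            simp [Algebra.TensorProduct.tmul_mul_tmul, Q.S_mul, mul_assoc]
        | add r1 r2 ih1 ih2 =>
            simp only [map_add, add_mul, mul_add, ih1, ih2]
    | add t1 t2 ih1 ih2 =>
        simp only [map_add, mul_add, ih1, ih2]
  have hc : (LinearMap.mul' K A)
      ((TensorProduct.map ((LinearMap.mulRight K Q.α).comp Q.S) LinearMap.id)
        ((TensorProduct.comm K A A) Q.R)) = th Q Q.R := rfl
  unfold QH.uOp
  rw [hc]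
  exact key Q.R (pel Q)

lemma sa_th (Q : QuasiTriangular K A) (t : A ⊗[K] A) :
    Q.S Q.α * th Q t = th Q (t * ((1:A) ⊗ₜ[K] Q.α)) := by
  induction t using TensorProduct.induction_on with
  | zero => simp
  | tmul x y =>
      simp [Algebra.TensorProduct.tmul_mul_tmul, Q.S_mul, mul_assoc]
  | add t1 t2 ih1 ih2 =>
      simp only [map_add, mul_add, add_mul, ih1, ih2]

lemma th_comm_mul (Q : QuasiTriangular K A) (s : A ⊗[K] A) (x y : A) :
    th Q ((TensorProduct.comm K A A) s * (x ⊗ₜ[K] y)) = Q.S y * aAd Q s * x := by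
  induction s using TensorProduct.induction_on with
  | zero => simp
  | tmul a b =>
      simp [Algebra.TensorProduct.tmul_mul_tmul, Q.S_mul, mul_assoc]
  | add s1 s2 ih1 ih2 =>
      simp only [map_add, add_mul, mul_add, ih1, ih2]

lemma th_dd (Q : QuasiTriangular K A) (a : A) (t : A ⊗[K] A) :
    th Q ((TensorProduct.comm K A A) (Q.Δ a) * t) = Q.ε a • th Q t := by
  induction t using TensorProduct.induction_on with
  | zero => simp
  | tmul x y =>
      rw [th_comm_mul, aAd_dd]
      simp [mul_smul_comm, smul_mul_assoc]
  | add t1 t2 ih1 ih2 =>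
      simp only [mul_add, map_add, smul_add, ih1, ih2]

lemma th_R_dd (Q : QuasiTriangular K A) (a : A) (t : A ⊗[K] A) :
    th Q (Q.R * Q.Δ a * t) = Q.ε a • th Q (Q.R * t) := by
  rw [← Q.intertwine a, mul_assoc]
  exact th_dd Q a _

/-! ### leg maps on the fourfold tensor product -/

/-- `Δ ⊗ id ⊗ id`. -/
def D1 (Q : QuasiTriangular K A) :
    A ⊗[K] (A ⊗[K] A) →ₐ[K] A ⊗[K] (A ⊗[K] (A ⊗[K] A)) :=
  (Algebra.TensorProduct.assoc K K K A A (A ⊗[K] A)).toAlgHom.comp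
    (Algebra.TensorProduct.map Q.Δ (AlgHom.id K (A ⊗[K] A)))

/-- `id ⊗ Δ ⊗ id`. -/
def D2 (Q : QuasiTriangular K A) :
    A ⊗[K] (A ⊗[K] A) →ₐ[K] A ⊗[K] (A ⊗[K] (A ⊗[K] A)) :=
  Algebra.TensorProduct.map (AlgHom.id K A) (QH.Δ1 Q.Δ)

/-- `id ⊗ id ⊗ Δ`. -/
def D3 (Q : QuasiTriangular K A) :
    A ⊗[K] (A ⊗[K] A) →ₐ[K] A ⊗[K] (A ⊗[K] (A ⊗[K] A)) :=
  Algebra.TensorProduct.map (AlgHom.id K A)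
    (Algebra.TensorProduct.map (AlgHom.id K A) Q.Δ)

/-- legs 1,2,3. -/
def E123 : A ⊗[K] (A ⊗[K] A) →ₐ[K] A ⊗[K] (A ⊗[K] (A ⊗[K] A)) :=
  Algebra.TensorProduct.map (AlgHom.id K A)
    (Algebra.TensorProduct.map (AlgHom.id K A)
      (Algebra.TensorProduct.includeLeft : A →ₐ[K] A ⊗[K] A))

/-- legs 2,3,4. -/
def E234 : A ⊗[K] (A ⊗[K] A) →ₐ[K] A ⊗[K] (A ⊗[K] (A ⊗[K] A)) :=
  Algebra.TensorProduct.includeRight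

lemma pent (Q : QuasiTriangular K A) :
    D1 Q Q.Φ * D3 Q Q.Φ = E123 Q.Φ * D2 Q Q.Φ * E234 Q.Φ :=
  Q.pentagon

@[simp] lemma D1_tmul (Q : QuasiTriangular K A) (x : A) (u : A ⊗[K] A) :
    D1 Q (x ⊗ₜ[K] u) =
      (Algebra.TensorProduct.assoc K K K A A (A ⊗[K] A)) (Q.Δ x ⊗ₜ[K] u) := by
  simp [D1]

@[simp] lemma D2_tmul (Q : QuasiTriangular K A) (x y z : A) :
    D2 Q (x ⊗ₜ[K] (y ⊗ₜ[K] z)) =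
      x ⊗ₜ[K] ((Algebra.TensorProduct.assoc K K K A A A) (Q.Δ y ⊗ₜ[K] z)) := by
  simp [D2, QH.Δ1]

@[simp] lemma D3_tmul (Q : QuasiTriangular K A) (x y z : A) :
    D3 Q (x ⊗ₜ[K] (y ⊗ₜ[K] z)) = x ⊗ₜ[K] (y ⊗ₜ[K] Q.Δ z) := by
  simp [D3]

@[simp] lemma E123_tmul (x y z : A) :
    (E123 : A ⊗[K] (A ⊗[K] A) →ₐ[K] _) (x ⊗ₜ[K] (y ⊗ₜ[K] z)) =
      x ⊗ₜ[K] (y ⊗ₜ[K] (z ⊗ₜ[K] (1:A))) := by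
  simp [E123]

@[simp] lemma E234_tmul (s : A ⊗[K] (A ⊗[K] A)) :
    (E234 : A ⊗[K] (A ⊗[K] A) →ₐ[K] _) s = (1:A) ⊗ₜ[K] s := by
  simp [E234]

/-- `M (a⊗b⊗c⊗d) = a ⊗ b β S(c) α d`. -/
def Mm (Q : QuasiTriangular K A) :
    A ⊗[K] (A ⊗[K] (A ⊗[K] A)) →ₗ[K] A ⊗[K] A :=
  TensorProduct.map LinearMap.id
    ((LinearMap.mul' K A) ∘ₗ
      (TensorProduct.map LinearMap.id
        ((LinearMap.mul' K A) ∘ₗ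
          (TensorProduct.map ((LinearMap.mulLeft K Q.β).comp Q.S)
            (LinearMap.mulLeft K Q.α)))))

@[simp] lemma Mm_tmul (Q : QuasiTriangular K A) (a b c d : A) :
    Mm Q (a ⊗ₜ[K] (b ⊗ₜ[K] (c ⊗ₜ[K] d))) =
      a ⊗ₜ[K] (b * (Q.β * Q.S c * (Q.α * d))) := by
  simp [Mm, mul_assoc]

/-- contraction `ε` on leg 2 of `A ⊗ (A ⊗ A)`. -/
def h2 (Q : QuasiTriangular K A) : A ⊗[K] (A ⊗[K] A) →ₐ[K] A ⊗[K] A :=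
  Algebra.TensorProduct.map (AlgHom.id K A)
    ((Algebra.TensorProduct.lid K A).toAlgHom.comp
      (Algebra.TensorProduct.map Q.ε (AlgHom.id K A)))

@[simp] lemma h2_tmul (Q : QuasiTriangular K A) (x y z : A) :
    h2 Q (x ⊗ₜ[K] (y ⊗ₜ[K] z)) = Q.ε y • (x ⊗ₜ[K] z) := by
  simp [h2, TensorProduct.tmul_smul]

/-- contraction `ε` on leg 3. -/
def h3 (Q : QuasiTriangular K A) : A ⊗[K] (A ⊗[K] A) →ₐ[K] A ⊗[K] A :=
  Algebra.TensorProduct.map (AlgHom.id K A)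
    ((Algebra.TensorProduct.rid K K A).toAlgHom.comp
      (Algebra.TensorProduct.map (AlgHom.id K A) Q.ε))

@[simp] lemma h3_tmul (Q : QuasiTriangular K A) (x y z : A) :
    h3 Q (x ⊗ₜ[K] (y ⊗ₜ[K] z)) = Q.ε z • (x ⊗ₜ[K] y) := by
  simp [h3, TensorProduct.tmul_smul]

/-- contraction `ε` on leg 1. -/
def h1 (Q : QuasiTriangular K A) : A ⊗[K] (A ⊗[K] A) →ₐ[K] A ⊗[K] A :=
  (Algebra.TensorProduct.lid K (A ⊗[K] A)).toAlgHom.comp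
    (Algebra.TensorProduct.map Q.ε (AlgHom.id K (A ⊗[K] A)))

@[simp] lemma h1_tmul (Q : QuasiTriangular K A) (x : A) (u : A ⊗[K] A) :
    h1 Q (x ⊗ₜ[K] u) = Q.ε x • u := by
  simp [h1]

/-- `ε ⊗ ε` as an algebra map `A ⊗ A → K`. -/
def h0 (Q : QuasiTriangular K A) : A ⊗[K] A →ₐ[K] K :=
  (Algebra.TensorProduct.lid K K).toAlgHom.comp
    (Algebra.TensorProduct.map Q.ε Q.ε)

@[simp] lemma h0_tmul (Q : QuasiTriangular K A) (x y : A) :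
    h0 Q (x ⊗ₜ[K] y) = Q.ε x * Q.ε y := by
  simp [h0, Algebra.TensorProduct.lid_tmul, smul_eq_mul]

/-- contraction `ε` on legs 2 and 3. -/
def c23 (Q : QuasiTriangular K A) : A ⊗[K] (A ⊗[K] A) →ₐ[K] A :=
  (Algebra.TensorProduct.rid K K A).toAlgHom.comp
    (Algebra.TensorProduct.map (AlgHom.id K A) (h0 Q))

@[simp] lemma c23_tmul (Q : QuasiTriangular K A) (x y z : A) :
    c23 Q (x ⊗ₜ[K] (y ⊗ₜ[K] z)) = (Q.ε y * Q.ε z) • x := by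
  simp [c23]

/-- contraction `ε` on legs 1 and 2. -/
def c12 (Q : QuasiTriangular K A) : A ⊗[K] (A ⊗[K] A) →ₐ[K] A :=
  ((Algebra.TensorProduct.lid K A).toAlgHom.comp
    (Algebra.TensorProduct.map Q.ε (AlgHom.id K A))).comp (h1 Q)

@[simp] lemma c12_tmul (Q : QuasiTriangular K A) (x y z : A) :
    c12 Q (x ⊗ₜ[K] (y ⊗ₜ[K] z)) = (Q.ε x * Q.ε y) • z := by
  simp [c12, mul_smul, mul_comm]

/-- contraction `ε` on legs 3 and 4 of the fourfold product. -/
def Q2 (Q : QuasiTriangular K A) :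
    A ⊗[K] (A ⊗[K] (A ⊗[K] A)) →ₐ[K] A ⊗[K] A :=
  Algebra.TensorProduct.map (AlgHom.id K A)
    ((Algebra.TensorProduct.rid K K A).toAlgHom.comp
      (Algebra.TensorProduct.map (AlgHom.id K A) (h0 Q)))

@[simp] lemma Q2_tmul (Q : QuasiTriangular K A) (a b c d : A) :
    Q2 Q (a ⊗ₜ[K] (b ⊗ₜ[K] (c ⊗ₜ[K] d))) =
      (Q.ε c * Q.ε d) • (a ⊗ₜ[K] b) := by
  simp [Q2, TensorProduct.tmul_smul]

/-- contraction `ε` on legs 1 and 2 of the fourfold product. -/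
def Q1 (Q : QuasiTriangular K A) :
    A ⊗[K] (A ⊗[K] (A ⊗[K] A)) →ₐ[K] A ⊗[K] A :=
  (h1 Q).comp
    ((Algebra.TensorProduct.lid K (A ⊗[K] (A ⊗[K] A))).toAlgHom.comp
      (Algebra.TensorProduct.map Q.ε (AlgHom.id K (A ⊗[K] (A ⊗[K] A)))))

@[simp] lemma Q1_tmul (Q : QuasiTriangular K A) (a b : A) (u : A ⊗[K] A) :
    Q1 Q (a ⊗ₜ[K] (b ⊗ₜ[K] u)) = (Q.ε a * Q.ε b) • u := by
  simp [Q1, mul_smul, mul_comm]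

lemma idem_unit {B : Type*} [Monoid B] {u v : B} (h : u * u = u) (hv : u * v = 1) :
    u = 1 := by
  have : u * u * v = u * v := by rw [h]
  rwa [mul_assoc, hv, mul_one] at this

lemma h2_phi (Q : QuasiTriangular K A) : h2 Q Q.Φ = 1 := Q.counit_Φ

lemma h2_phi' (Q : QuasiTriangular K A) : h2 Q Q.Φ' = 1 := by
  have : h2 Q Q.Φ' * h2 Q Q.Φ = 1 := by rw [← map_mul, Q.Φ_inv', map_one]
  rwa [h2_phi, mul_one] at this

lemma h0_dd (Q : QuasiTriangular K A) (a : A) : h0 Q (Q.Δ a) = Q.ε a := by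
  have aux : ∀ v : A ⊗[K] A, h0 Q v =
      Q.ε ((Algebra.TensorProduct.rid K K A)
        ((Algebra.TensorProduct.map (AlgHom.id K A) Q.ε) v)) := by
    intro v
    induction v using TensorProduct.induction_on with
    | zero => simp
    | tmul x y => simp [Algebra.TensorProduct.rid_tmul, mul_comm]
    | add v1 v2 ih1 ih2 => simp only [map_add, ih1, ih2]
  rw [aux, Q.counit_right]

lemma ctr_dd (Q : QuasiTriangular K A) (a : A) :
    (Algebra.TensorProduct.rid K K A)
      ((Algebra.TensorProduct.map (AlgHom.id K A) Q.ε) (Q.Δ a)) = a :=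
  Q.counit_right a

lemma ctl_dd (Q : QuasiTriangular K A) (a : A) :
    (Algebra.TensorProduct.lid K A)
      ((Algebra.TensorProduct.map Q.ε (AlgHom.id K A)) (Q.Δ a)) = a :=
  Q.counit_left a

lemma c23_apply (Q : QuasiTriangular K A) (x : A) (u : A ⊗[K] A) :
    c23 Q (x ⊗ₜ[K] u) = h0 Q u • x := by
  simp [c23, Algebra.TensorProduct.rid_tmul]

lemma c23_phi (Q : QuasiTriangular K A) : c23 Q Q.Φ = 1 := by
  have aux : ∀ s : A ⊗[K] (A ⊗[K] A), c23 Q s =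
      (Algebra.TensorProduct.rid K K A)
        ((Algebra.TensorProduct.map (AlgHom.id K A) Q.ε) (h2 Q s)) := by
    intro s
    induction s using TensorProduct.induction_on with
    | zero => simp
    | tmul x u =>
        induction u using TensorProduct.induction_on with
        | zero => simp
        | tmul y z =>
            simp [Algebra.TensorProduct.rid_tmul, TensorProduct.tmul_smul,
              mul_smul, mul_comm]
        | add u1 u2 ih1 ih2 =>
            simp only [TensorProduct.tmul_add, map_add, ih1, ih2]
    | add s1 s2 ih1 ih2 => simp only [map_add, ih1, ih2]
  rw [aux, h2_phi, map_one, map_one]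

lemma c12_phi (Q : QuasiTriangular K A) : c12 Q Q.Φ = 1 := by
  have aux : ∀ s : A ⊗[K] (A ⊗[K] A), c12 Q s =
      (Algebra.TensorProduct.lid K A)
        ((Algebra.TensorProduct.map Q.ε (AlgHom.id K A)) (h2 Q s)) := by
    intro s
    induction s using TensorProduct.induction_on with
    | zero => simp
    | tmul x u =>
        induction u using TensorProduct.induction_on with
        | zero => simp
        | tmul y z =>
            simp only [c12_tmul, h2_tmul, map_smul,
              Algebra.TensorProduct.map_tmul, AlgHom.coe_id, id_eq,
              Algebra.TensorProduct.lid_tmul, smul_smul, mul_comm]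
        | add u1 u2 ih1 ih2 =>
            simp only [TensorProduct.tmul_add, map_add, ih1, ih2]
    | add s1 s2 ih1 ih2 => simp only [map_add, ih1, ih2]
  rw [aux, h2_phi, map_one, map_one]

lemma q2d1 (Q : QuasiTriangular K A) (s : A ⊗[K] (A ⊗[K] A)) :
    Q2 Q (D1 Q s) = Q.Δ (c23 Q s) := by
  have aux : ∀ (w : A ⊗[K] A) (u : A ⊗[K] A),
      Q2 Q ((Algebra.TensorProduct.assoc K K K A A (A ⊗[K] A)) (w ⊗ₜ[K] u)) =
        h0 Q u • w := by
    intro w u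
    induction w using TensorProduct.induction_on with
    | zero => simp
    | tmul a b =>
        induction u using TensorProduct.induction_on with
        | zero => simp
        | tmul y z => simp [Algebra.TensorProduct.assoc_tmul, TensorProduct.tmul_smul]
        | add u1 u2 ih1 ih2 =>
            simp only [TensorProduct.tmul_add, map_add, ih1, ih2, add_smul]
    | add w1 w2 ih1 ih2 =>
        simp only [TensorProduct.add_tmul, map_add, ih1, ih2, smul_add]
  induction s using TensorProduct.induction_on with
  | zero => simp
  | tmul x u => rw [D1_tmul, aux, c23_apply, map_smul]
  | add s1 s2 ih1 ih2 => simp only [map_add, ih1, ih2]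

lemma q2d3 (Q : QuasiTriangular K A) (s : A ⊗[K] (A ⊗[K] A)) :
    Q2 Q (D3 Q s) = h3 Q s := by
  have aux : ∀ (x y : A) (w : A ⊗[K] A),
      Q2 Q (x ⊗ₜ[K] (y ⊗ₜ[K] w)) = h0 Q w • (x ⊗ₜ[K] y) := by
    intro x y w
    induction w using TensorProduct.induction_on with
    | zero => simp
    | tmul c d => simp
    | add w1 w2 ih1 ih2 =>
        simp only [TensorProduct.tmul_add, map_add, ih1, ih2, add_smul]
  induction s using TensorProduct.induction_on with
  | zero => simp
  | tmul x u =>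
      induction u using TensorProduct.induction_on with
      | zero => simp
      | tmul y z => rw [D3_tmul, aux, h0_dd, h3_tmul]
      | add u1 u2 ih1 ih2 =>
          simp only [TensorProduct.tmul_add, map_add, ih1, ih2]
  | add s1 s2 ih1 ih2 => simp only [map_add, ih1, ih2]

lemma q2e123 (Q : QuasiTriangular K A) (s : A ⊗[K] (A ⊗[K] A)) :
    Q2 Q (E123 s) = h3 Q s := by
  induction s using TensorProduct.induction_on with
  | zero => simp
  | tmul x u =>
      induction u using TensorProduct.induction_on with
      | zero => simp
      | tmul y z => simp
      | add u1 u2 ih1 ih2 =>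
          simp only [TensorProduct.tmul_add, map_add, ih1, ih2]
  | add s1 s2 ih1 ih2 => simp only [map_add, ih1, ih2]

lemma q2d2 (Q : QuasiTriangular K A) (s : A ⊗[K] (A ⊗[K] A)) :
    Q2 Q (D2 Q s) = h3 Q s := by
  have aux : ∀ (x z : A) (w : A ⊗[K] A),
      Q2 Q (x ⊗ₜ[K] ((Algebra.TensorProduct.assoc K K K A A A) (w ⊗ₜ[K] z))) =
        Q.ε z • (x ⊗ₜ[K] ((Algebra.TensorProduct.rid K K A)
          ((Algebra.TensorProduct.map (AlgHom.id K A) Q.ε) w))) := by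
    intro x z w
    induction w using TensorProduct.induction_on with
    | zero => simp
    | tmul u v =>
        simp [Algebra.TensorProduct.assoc_tmul, Algebra.TensorProduct.rid_tmul,
          TensorProduct.tmul_smul, mul_smul, mul_comm]
    | add w1 w2 ih1 ih2 =>
        simp only [TensorProduct.add_tmul, map_add, TensorProduct.tmul_add,
          ih1, ih2, smul_add]
  induction s using TensorProduct.induction_on with
  | zero => simp
  | tmul x u =>
      induction u using TensorProduct.induction_on with
      | zero => simp
      | tmul y z => rw [D2_tmul, aux, ctr_dd, h3_tmul]
      | add u1 u2 ih1 ih2 =>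
          simp only [TensorProduct.tmul_add, map_add, ih1, ih2]
  | add s1 s2 ih1 ih2 => simp only [map_add, ih1, ih2]

lemma q2e234 (Q : QuasiTriangular K A) (s : A ⊗[K] (A ⊗[K] A)) :
    Q2 Q (E234 s) = (1:A) ⊗ₜ[K] c23 Q s := by
  induction s using TensorProduct.induction_on with
  | zero => simp
  | tmul x u =>
      rw [E234_tmul, c23_apply]
      induction u using TensorProduct.induction_on with
      | zero => simp
      | tmul y z => simp [TensorProduct.tmul_smul]
      | add u1 u2 ih1 ih2 =>
          simp only [TensorProduct.tmul_add, map_add, ih1, ih2, add_smul,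
            smul_add]
  | add s1 s2 ih1 ih2 =>
      simp only [map_add, ih1, ih2, TensorProduct.tmul_add]

lemma h3_phi (Q : QuasiTriangular K A) : h3 Q Q.Φ = 1 := by
  have hp := congrArg (Q2 Q) (pent Q)
  simp only [map_mul, q2d1, q2d3, q2e123, q2d2, q2e234, c23_phi, map_one,
    one_mul] at hp
  have hone : ((1:A) ⊗ₜ[K] (1:A)) = (1 : A ⊗[K] A) :=
    (Algebra.TensorProduct.one_def).symm
  rw [hone, mul_one] at hp
  have hv : h3 Q Q.Φ * h3 Q Q.Φ' = 1 := by rw [← map_mul, Q.Φ_inv, map_one]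
  exact idem_unit hp.symm hv

lemma q1d1 (Q : QuasiTriangular K A) (s : A ⊗[K] (A ⊗[K] A)) :
    Q1 Q (D1 Q s) = h1 Q s := by
  have aux : ∀ (w : A ⊗[K] A) (u : A ⊗[K] A),
      Q1 Q ((Algebra.TensorProduct.assoc K K K A A (A ⊗[K] A)) (w ⊗ₜ[K] u)) =
        h0 Q w • u := by
    intro w u
    induction w using TensorProduct.induction_on with
    | zero => simp
    | tmul a b => simp [Algebra.TensorProduct.assoc_tmul]
    | add w1 w2 ih1 ih2 =>
        simp only [TensorProduct.add_tmul, map_add, ih1, ih2, add_smul]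
  induction s using TensorProduct.induction_on with
  | zero => simp
  | tmul x u => rw [D1_tmul, aux, h0_dd, h1_tmul]
  | add s1 s2 ih1 ih2 => simp only [map_add, ih1, ih2]

lemma q1d3 (Q : QuasiTriangular K A) (s : A ⊗[K] (A ⊗[K] A)) :
    Q1 Q (D3 Q s) = Q.Δ (c12 Q s) := by
  induction s using TensorProduct.induction_on with
  | zero => simp
  | tmul x u =>
      induction u using TensorProduct.induction_on with
      | zero => simp
      | tmul y z => rw [D3_tmul, Q1_tmul, c12_tmul, map_smul]
      | add u1 u2 ih1 ih2 =>
          simp only [TensorProduct.tmul_add, map_add, ih1, ih2]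
  | add s1 s2 ih1 ih2 => simp only [map_add, ih1, ih2]

lemma q1e123 (Q : QuasiTriangular K A) (s : A ⊗[K] (A ⊗[K] A)) :
    Q1 Q (E123 s) = (c12 Q s) ⊗ₜ[K] (1:A) := by
  induction s using TensorProduct.induction_on with
  | zero => simp
  | tmul x u =>
      induction u using TensorProduct.induction_on with
      | zero => simp
      | tmul y z => simp [TensorProduct.smul_tmul']
      | add u1 u2 ih1 ih2 =>
          simp only [TensorProduct.tmul_add, map_add, ih1, ih2,
            TensorProduct.add_tmul]
  | add s1 s2 ih1 ih2 =>
      simp only [map_add, ih1, ih2, TensorProduct.add_tmul]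

lemma q1d2 (Q : QuasiTriangular K A) (s : A ⊗[K] (A ⊗[K] A)) :
    Q1 Q (D2 Q s) = h1 Q s := by
  have aux : ∀ (x z : A) (w : A ⊗[K] A),
      Q1 Q (x ⊗ₜ[K] ((Algebra.TensorProduct.assoc K K K A A A) (w ⊗ₜ[K] z))) =
        Q.ε x • (((Algebra.TensorProduct.lid K A)
          ((Algebra.TensorProduct.map Q.ε (AlgHom.id K A)) w)) ⊗ₜ[K] z) := by
    intro x z w
    induction w using TensorProduct.induction_on with
    | zero => simp
    | tmul u v =>
        simp only [Algebra.TensorProduct.assoc_tmul, Q1_tmul,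
          Algebra.TensorProduct.map_tmul, AlgHom.coe_id, id_eq,
          Algebra.TensorProduct.lid_tmul, TensorProduct.smul_tmul', smul_smul]
    | add w1 w2 ih1 ih2 =>
        simp only [TensorProduct.add_tmul, map_add, TensorProduct.tmul_add,
          ih1, ih2, smul_add]
  induction s using TensorProduct.induction_on with
  | zero => simp
  | tmul x u =>
      induction u using TensorProduct.induction_on with
      | zero => simp
      | tmul y z => rw [D2_tmul, aux, ctl_dd, h1_tmul]
      | add u1 u2 ih1 ih2 =>
          simp only [TensorProduct.tmul_add, map_add, ih1, ih2]
  | add s1 s2 ih1 ih2 => simp only [map_add, ih1, ih2]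

lemma q1e234 (Q : QuasiTriangular K A) (s : A ⊗[K] (A ⊗[K] A)) :
    Q1 Q (E234 s) = h1 Q s := by
  induction s using TensorProduct.induction_on with
  | zero => simp
  | tmul x u => rw [E234_tmul, Q1_tmul]; simp
  | add s1 s2 ih1 ih2 => simp only [map_add, ih1, ih2]

lemma h1_phi (Q : QuasiTriangular K A) : h1 Q Q.Φ = 1 := by
  have hp := congrArg (Q1 Q) (pent Q)
  simp only [map_mul, q1d1, q1d3, q1e123, q1d2, q1e234, c12_phi, map_one] at hp
  have hone : ((1:A) ⊗ₜ[K] (1:A)) = (1 : A ⊗[K] A) :=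
    (Algebra.TensorProduct.one_def).symm
  rw [hone, one_mul, mul_one] at hp
  have hv : h1 Q Q.Φ * h1 Q Q.Φ' = 1 := by rw [← map_mul, Q.Φ_inv, map_one]
  exact idem_unit hp.symm hv

lemma h1_phi' (Q : QuasiTriangular K A) : h1 Q Q.Φ' = 1 := by
  have : h1 Q Q.Φ' * h1 Q Q.Φ = 1 := by rw [← map_mul, Q.Φ_inv', map_one]
  rwa [h1_phi, mul_one] at this

end S17


open TensorProduct

noncomputable section

namespace S17

set_option maxHeartbeats 1000000
set_option synthInstance.maxHeartbeats 400000
set_option maxRecDepth 8000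

variable {K A : Type*} [Field K] [Ring A] [Algebra K A]

/-! ### ring lemma shims for the fourfold tensor product -/

lemma mul_add4 (x y z : A ⊗[K] (A ⊗[K] (A ⊗[K] A))) :
    x * (y + z) = x*y + x*z := Distrib.left_distrib x y z

lemma add_mul4 (x y z : A ⊗[K] (A ⊗[K] (A ⊗[K] A))) :
    (x + y) * z = x*z + y*z := Distrib.right_distrib x y z

lemma zero_mul4 (x : A ⊗[K] (A ⊗[K] (A ⊗[K] A))) : 0 * x = 0 := zero_mul x

lemma mul_zero4 (x : A ⊗[K] (A ⊗[K] (A ⊗[K] A))) : x * 0 = 0 := mul_zero x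

lemma mul_assoc4 (x y z : A ⊗[K] (A ⊗[K] (A ⊗[K] A))) :
    x * y * z = x * (y * z) := mul_assoc x y z

lemma smul_mul4 (k : K) (x y : A ⊗[K] (A ⊗[K] (A ⊗[K] A))) :
    (k • x) * y = k • (x*y) := smul_mul_assoc k x y

lemma mul_smul4 (k : K) (x y : A ⊗[K] (A ⊗[K] (A ⊗[K] A))) :
    x * (k • y) = k • (x*y) := mul_smul_comm k x y

lemma mul_one4 (x : A ⊗[K] (A ⊗[K] (A ⊗[K] A))) : x * 1 = x := mul_one x

lemma one_mul4 (x : A ⊗[K] (A ⊗[K] (A ⊗[K] A))) : 1 * x = x := one_mul x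

/-- `g2 t (y⊗z) = ((id⊗mbs) t) * (1 ⊗ S(y) α z)`. -/
def g2 (Q : QuasiTriangular K A) (t : A ⊗[K] (A ⊗[K] A)) :
    A ⊗[K] A →ₗ[K] A ⊗[K] A :=
  (LinearMap.mulLeft K ((TensorProduct.map LinearMap.id (mbs Q)) t)).comp
    ((TensorProduct.mk K A A 1).comp (aAd Q))

@[simp] lemma g2_tmul (Q : QuasiTriangular K A) (t : A ⊗[K] (A ⊗[K] A)) (y z : A) :
    g2 Q t (y ⊗ₜ[K] z) =
      ((TensorProduct.map LinearMap.id (mbs Q)) t) *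
        ((1:A) ⊗ₜ[K] (Q.S y * Q.α * z)) := by
  simp [g2, TensorProduct.mk_apply]

lemma claimA_aux (Q : QuasiTriangular K A) (w : A ⊗[K] A)
    (t : A ⊗[K] (A ⊗[K] A)) (y z : A) :
    w * (((TensorProduct.map LinearMap.id (mbs Q)) t) *
        ((1:A) ⊗ₜ[K] (Q.S y * Q.α * z))) =
      Mm Q ((Algebra.TensorProduct.assoc K K K A A (A ⊗[K] A))
          (w ⊗ₜ[K] (y ⊗ₜ[K] z)) * E123 t) := by
  induction w using TensorProduct.induction_on with
  | zero => simp only [TensorProduct.zero_tmul, map_zero, zero_mul, zero_mul4]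
  | tmul a b =>
      induction t using TensorProduct.induction_on with
      | zero =>
          simp only [map_zero, zero_mul, mul_zero, mul_zero4, zero_mul4]
      | tmul X u =>
          induction u using TensorProduct.induction_on with
          | zero =>
              simp only [TensorProduct.tmul_zero, map_zero, zero_mul,
                mul_zero, mul_zero4, zero_mul4]
          | tmul Y Z =>
              simp only [TensorProduct.map_tmul, LinearMap.id_coe, id_eq,
                mbs_tmul, Algebra.TensorProduct.assoc_tmul, E123_tmul,
                Algebra.TensorProduct.tmul_mul_tmul, Mm_tmul]
              simp [Q.S_mul, mul_assoc]
          | add u1 u2 ih1 ih2 =>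
              simp only [TensorProduct.tmul_add, map_add, add_mul, mul_add,
                add_mul4, mul_add4, ih1, ih2]
      | add t1 t2 ih1 ih2 =>
          simp only [map_add, add_mul, mul_add, add_mul4, mul_add4, ih1, ih2]
  | add w1 w2 ih1 ih2 =>
      simp only [TensorProduct.add_tmul, map_add, add_mul, mul_add,
        add_mul4, mul_add4, ih1, ih2]

lemma claimA (Q : QuasiTriangular K A) (s t : A ⊗[K] (A ⊗[K] A)) :
    (LinearMap.mul' K (A ⊗[K] A))
        ((TensorProduct.map Q.Δ.toLinearMap (g2 Q t)) s) =
      Mm Q (D1 Q s * E123 t) := by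
  induction s using TensorProduct.induction_on with
  | zero => simp only [map_zero, zero_mul4]
  | tmul x u =>
      induction u using TensorProduct.induction_on with
      | zero =>
          simp only [TensorProduct.tmul_zero, map_zero, zero_mul4,
            TensorProduct.map_tmul, Mm_tmul]
      | tmul y z =>
          rw [TensorProduct.map_tmul, LinearMap.mul'_apply, g2_tmul, D1_tmul,
            AlgHom.toLinearMap_apply]
          exact claimA_aux Q (Q.Δ x) t y z
      | add u1 u2 ih1 ih2 =>
          simp only [TensorProduct.tmul_add, map_add, add_mul4, ih1, ih2]
  | add s1 s2 ih1 ih2 =>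
      simp only [map_add, add_mul4, ih1, ih2]

/-- embedding `A⊗A → A⊗(A⊗(A⊗A))` into legs 1,4. -/
def Lmap : A ⊗[K] A →ₗ[K] A ⊗[K] (A ⊗[K] (A ⊗[K] A)) :=
  TensorProduct.map LinearMap.id
    ((TensorProduct.mk K A (A ⊗[K] A) 1).comp (TensorProduct.mk K A A 1))

@[simp] lemma Lmap_tmul (x z : A) :
    (Lmap : A ⊗[K] A →ₗ[K] _) (x ⊗ₜ[K] z) =
      x ⊗ₜ[K] ((1:A) ⊗ₜ[K] ((1:A) ⊗ₜ[K] z)) := by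
  simp [Lmap, TensorProduct.mk_apply]

lemma Lmap_one : (Lmap : A ⊗[K] A →ₗ[K] _) 1 = 1 := by
  rw [Algebra.TensorProduct.one_def, Lmap_tmul]
  rfl

/-- `E13 s = Σ ε(s²) s¹ ⊗ 1 ⊗ 1 ⊗ s³`. -/
def E13 (Q : QuasiTriangular K A) :
    A ⊗[K] (A ⊗[K] A) →ₗ[K] A ⊗[K] (A ⊗[K] (A ⊗[K] A)) :=
  Lmap.comp (h2 Q).toLinearMap

lemma E13_phi' (Q : QuasiTriangular K A) : E13 Q Q.Φ' = 1 := by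
  have h : E13 Q Q.Φ' = Lmap (h2 Q Q.Φ') := rfl
  rw [h, h2_phi', Lmap_one]

lemma claimC_aux (Q : QuasiTriangular K A) (a b c d x z : A) (w : A ⊗[K] A) :
    Mm Q ((a ⊗ₜ[K] (b ⊗ₜ[K] (c ⊗ₜ[K] d))) *
        (x ⊗ₜ[K] ((Algebra.TensorProduct.assoc K K K A A A) (w ⊗ₜ[K] z)))) =
      (a * x) ⊗ₜ[K] (b * (mbs Q w * (Q.S c * (Q.α * (d * z))))) := by
  induction w using TensorProduct.induction_on with
  | zero =>
      simp only [TensorProduct.zero_tmul, map_zero, TensorProduct.tmul_zero,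
        mul_zero4, zero_mul, mul_zero]
  | tmul u v =>
      simp only [Algebra.TensorProduct.assoc_tmul,
        Algebra.TensorProduct.tmul_mul_tmul, Mm_tmul, mbs_tmul]
      simp [Q.S_mul, mul_assoc]
  | add w1 w2 ih1 ih2 =>
      simp only [TensorProduct.add_tmul, map_add, TensorProduct.tmul_add,
        mul_add4, mul_add, add_mul, ih1, ih2]

lemma claimC (Q : QuasiTriangular K A) (t : A ⊗[K] (A ⊗[K] (A ⊗[K] A)))
    (s : A ⊗[K] (A ⊗[K] A)) :
    Mm Q (t * D2 Q s) = Mm Q (t * E13 Q s) := by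
  induction t using TensorProduct.induction_on with
  | zero => simp only [zero_mul4, map_zero]
  | tmul a r2 =>
      induction r2 using TensorProduct.induction_on with
      | zero =>
          simp only [TensorProduct.tmul_zero, zero_mul4, map_zero]
      | tmul b r3 =>
          induction r3 using TensorProduct.induction_on with
          | zero =>
              simp only [TensorProduct.tmul_zero, zero_mul4, map_zero]
          | tmul c d =>
              induction s using TensorProduct.induction_on with
              | zero => simp only [map_zero, mul_zero4]
              | tmul x u =>
                  induction u using TensorProduct.induction_on with
                  | zero =>
                      simp only [TensorProduct.tmul_zero, map_zero,
                        mul_zero4]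
                  | tmul y zz =>
                      rw [D2_tmul, claimC_aux Q a b c d x zz (Q.Δ y), mbs_dd]
                      have he13 : E13 Q (x ⊗ₜ[K] (y ⊗ₜ[K] zz)) =
                          Q.ε y • (x ⊗ₜ[K] ((1:A) ⊗ₜ[K] ((1:A) ⊗ₜ[K] zz))) := by
                        have h : E13 Q (x ⊗ₜ[K] (y ⊗ₜ[K] zz)) =
                            Lmap (h2 Q (x ⊗ₜ[K] (y ⊗ₜ[K] zz))) := rfl
                        rw [h, h2_tmul, map_smul, Lmap_tmul]
                      rw [he13, mul_smul4, map_smul]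
                      simp [Algebra.TensorProduct.tmul_mul_tmul, Mm_tmul,
                        TensorProduct.tmul_smul, smul_mul_assoc,
                        mul_smul_comm, Q.S_mul, mul_assoc]
                  | add u1 u2 ih1 ih2 =>
                      simp only [TensorProduct.tmul_add, map_add, mul_add4,
                        ih1, ih2]
              | add s1 s2 ih1 ih2 =>
                  simp only [map_add, mul_add4, ih1, ih2]
          | add r31 r32 ih1 ih2 =>
              simp only [TensorProduct.tmul_add, map_add, add_mul4, mul_add4,
                ih1, ih2]
      | add r21 r22 ih1 ih2 =>
          simp only [TensorProduct.tmul_add, map_add, add_mul4, mul_add4,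
            ih1, ih2]
  | add t1 t2 ih1 ih2 =>
      simp only [map_add, add_mul4, mul_add4, ih1, ih2]

/-- the `hopf3` composite. -/
def psi3 (Q : QuasiTriangular K A) : A ⊗[K] (A ⊗[K] A) →ₗ[K] A :=
  (QH.mul3 K A).comp
    (TensorProduct.map LinearMap.id
      (TensorProduct.map ((LinearMap.mulLeft K Q.β).comp Q.S)
        (LinearMap.mulLeft K Q.α)))

@[simp] lemma psi3_tmul (Q : QuasiTriangular K A) (x y z : A) :
    psi3 Q (x ⊗ₜ[K] (y ⊗ₜ[K] z)) = x * (Q.β * Q.S y * (Q.α * z)) := by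
  simp [psi3, QH.mul3, mul_assoc]

lemma psi3_phi' (Q : QuasiTriangular K A) : psi3 Q Q.Φ' = 1 := Q.hopf3

lemma claimD_aux (Q : QuasiTriangular K A) (X Y x y z : A) (w : A ⊗[K] A) :
    Mm Q ((X ⊗ₜ[K] (Y ⊗ₜ[K] w)) * ((1:A) ⊗ₜ[K] (x ⊗ₜ[K] (y ⊗ₜ[K] z)))) =
      X ⊗ₜ[K] (Y * (x * (Q.β * Q.S y * (aAd Q w * z)))) := by
  induction w using TensorProduct.induction_on with
  | zero =>
      simp only [TensorProduct.tmul_zero, zero_mul4, map_zero, mul_zero,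
        zero_mul]
  | tmul u v =>
      simp only [Algebra.TensorProduct.tmul_mul_tmul, Mm_tmul, aAd_tmul]
      simp [Q.S_mul, mul_assoc]
  | add w1 w2 ih1 ih2 =>
      simp only [TensorProduct.tmul_add, map_add, add_mul4, mul_add, add_mul,
        TensorProduct.add_tmul, ih1, ih2]

lemma claimD (Q : QuasiTriangular K A) (s t : A ⊗[K] (A ⊗[K] A)) :
    Mm Q (D3 Q s * E234 t) = h3 Q s * ((1:A) ⊗ₜ[K] psi3 Q t) := by
  induction s using TensorProduct.induction_on with
  | zero => simp only [map_zero, zero_mul4, zero_mul]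
  | tmul X u =>
      induction u using TensorProduct.induction_on with
      | zero =>
          simp only [TensorProduct.tmul_zero, map_zero, zero_mul4, zero_mul]
      | tmul Y Z =>
          induction t using TensorProduct.induction_on with
          | zero =>
              simp only [map_zero, mul_zero4, TensorProduct.tmul_zero,
                mul_zero]
          | tmul x v =>
              induction v using TensorProduct.induction_on with
              | zero =>
                  simp only [TensorProduct.tmul_zero, map_zero, mul_zero4,
                    mul_zero]
              | tmul y z =>
                  rw [D3_tmul, E234_tmul, claimD_aux, aAd_dd, h3_tmul,
                    psi3_tmul]
                  simp [smul_mul_assoc, mul_smul_comm,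
                    TensorProduct.tmul_smul,
                    Algebra.TensorProduct.tmul_mul_tmul, mul_assoc]
              | add v1 v2 ih1 ih2 =>
                  simp only [TensorProduct.tmul_add, map_add, mul_add4,
                    mul_add, ih1, ih2]
          | add t1 t2 ih1 ih2 =>
              simp only [map_add, mul_add4, mul_add, TensorProduct.tmul_add,
                ih1, ih2]
      | add u1 u2 ih1 ih2 =>
          simp only [TensorProduct.tmul_add, map_add, add_mul4, add_mul,
            ih1, ih2]
  | add s1 s2 ih1 ih2 =>
      simp only [map_add, add_mul4, add_mul, ih1, ih2]

lemma pentjuggle (Q : QuasiTriangular K A) :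
    D1 Q Q.Φ' * E123 Q.Φ = D3 Q Q.Φ * E234 Q.Φ' * D2 Q Q.Φ' := by
  have e2 : (E234 : A ⊗[K] (A ⊗[K] A) →ₐ[K] _) Q.Φ * E234 Q.Φ' = 1 :=
    by rw [← map_mul, Q.Φ_inv]; exact (E234 : A ⊗[K] (A ⊗[K] A) →ₐ[K] _).map_one'
  have d2 : D2 Q Q.Φ * D2 Q Q.Φ' = 1 :=
    by rw [← map_mul, Q.Φ_inv]; exact (D2 Q).map_one'
  have d1 : D1 Q Q.Φ' * D1 Q Q.Φ = 1 :=
    by rw [← map_mul, Q.Φ_inv']; exact (D1 Q).map_one'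
  have e1 : D1 Q Q.Φ * D3 Q Q.Φ * E234 Q.Φ' * D2 Q Q.Φ' = E123 Q.Φ := by
    calc D1 Q Q.Φ * D3 Q Q.Φ * E234 Q.Φ' * D2 Q Q.Φ'
        = (E123 Q.Φ * D2 Q Q.Φ * E234 Q.Φ) * E234 Q.Φ' * D2 Q Q.Φ' := by
          rw [pent]
      _ = (E123 Q.Φ * D2 Q Q.Φ) * (E234 Q.Φ * E234 Q.Φ') * D2 Q Q.Φ' := by
          rw [mul_assoc4 (E123 Q.Φ * D2 Q Q.Φ)]
      _ = (E123 Q.Φ * D2 Q Q.Φ) * D2 Q Q.Φ' := by rw [e2, mul_one4]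
      _ = E123 Q.Φ * (D2 Q Q.Φ * D2 Q Q.Φ') := by rw [mul_assoc4]
      _ = E123 Q.Φ := by rw [d2, mul_one4]
  have e1' : D1 Q Q.Φ * (D3 Q Q.Φ * E234 Q.Φ' * D2 Q Q.Φ') = E123 Q.Φ := by
    rw [← e1]
    simp only [mul_assoc4]
  rw [← e1', ← mul_assoc4, d1, one_mul4]

lemma diamond (Q : QuasiTriangular K A) :
    (LinearMap.mul' K (A ⊗[K] A))
        ((TensorProduct.map Q.Δ.toLinearMap (g2 Q Q.Φ)) Q.Φ') = 1 := by
  rw [claimA Q Q.Φ' Q.Φ, pentjuggle, claimC Q (D3 Q Q.Φ * E234 Q.Φ') Q.Φ',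
    E13_phi', mul_one4, claimD Q Q.Φ Q.Φ', h3_phi, psi3_phi', one_mul]
  exact (Algebra.TensorProduct.one_def).symm

lemma aAd_one (Q : QuasiTriangular K A) : aAd Q (1 : A ⊗[K] A) = Q.α := by
  rw [Algebra.TensorProduct.one_def, aAd_tmul, Q.S_one, one_mul, mul_one]

lemma step2 (Q : QuasiTriangular K A) (s : A ⊗[K] (A ⊗[K] A)) :
    th Q (Q.R * ((LinearMap.mul' K (A ⊗[K] A))
        ((TensorProduct.map Q.Δ.toLinearMap (g2 Q Q.Φ)) s))) =
      th Q (Q.R * pel Q * ((1:A) ⊗ₜ[K] aAd Q (h1 Q s))) := by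
  induction s using TensorProduct.induction_on with
  | zero => simp
  | tmul x u =>
      induction u using TensorProduct.induction_on with
      | zero => simp
      | tmul y z =>
          rw [TensorProduct.map_tmul, LinearMap.mul'_apply,
            AlgHom.toLinearMap_apply, g2_tmul, h1_tmul]
          have hp : (TensorProduct.map LinearMap.id (mbs Q)) Q.Φ = pel Q := rfl
          rw [hp, ← mul_assoc, th_R_dd, map_smul, aAd_tmul,
            TensorProduct.tmul_smul, mul_smul_comm, map_smul, ← mul_assoc]
      | add u1 u2 ih1 ih2 =>
          simp only [TensorProduct.tmul_add, map_add, mul_add, ih1, ih2]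
  | add s1 s2 ih1 ih2 =>
      simp only [map_add, TensorProduct.tmul_add, mul_add, ih1, ih2]

theorem final (Q : QuasiTriangular K A) :
    Q.S Q.α * QH.uOp Q.S Q.α Q.β Q.Φ Q.R = th Q Q.R := by
  have chain : th Q Q.R = Q.S Q.α * QH.uOp Q.S Q.α Q.β Q.Φ Q.R := by
    calc th Q Q.R = th Q (Q.R * 1) := by rw [mul_one]
    _ = th Q (Q.R * ((LinearMap.mul' K (A ⊗[K] A))
          ((TensorProduct.map Q.Δ.toLinearMap (g2 Q Q.Φ)) Q.Φ'))) := by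
        rw [diamond]
    _ = th Q (Q.R * pel Q * ((1:A) ⊗ₜ[K] aAd Q (h1 Q Q.Φ'))) := step2 Q Q.Φ'
    _ = th Q (Q.R * pel Q * ((1:A) ⊗ₜ[K] Q.α)) := by
        rw [h1_phi', aAd_one]
    _ = Q.S Q.α * th Q (Q.R * pel Q) := (sa_th Q _).symm
    _ = Q.S Q.α * QH.uOp Q.S Q.α Q.β Q.Φ Q.R := by rw [uop_eq]
  exact chain.symm

end S17

/-- `S(α) u = Σᵢ S(eⁱ) α eᵢ = m·(S⊗α)R^T`. -/
theorem statement17 {K A : Type*} [Field K] [Ring A] [Algebra K A] (Q : QuasiTriangular K A) :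
    Q.S Q.α * QH.uOp Q.S Q.α Q.β Q.Φ Q.R =
      (LinearMap.mul' K A)
        ((TensorProduct.map ((LinearMap.mulRight K Q.α).comp Q.S) LinearMap.id)
          ((TensorProduct.comm K A A) Q.R)) := by
  exact S17.final Q
end
end
end

section
/- Let A be a quasi-Hopf algebra of trace type (S²(a) = u a u⁻¹ for an invertible u), let V be a finite-dimensional A-module with representation π, and define ξ(a) = Tr_V(π(u S⁻¹(α) a)). Then ξ is an invariant linear form on A: ξ(Σ a₍₁₎ b S(a₍₂₎)) = ε(a)ξ(b) for all a, b ∈ A. -/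
open TensorProduct

noncomputable section

/-- For a quasi-Hopf algebra of trace type and a finite-dimensional module
`(V, π)`, the form `ξ(a) = Tr_V(π(u S⁻¹(α) a))` is an invariant linear form:
`ξ(Σ a₍₁₎ b S(a₍₂₎)) = ε(a) ξ(b)`. -/
theorem statement19 {K A V : Type*} [Field K] [Ring A] [Algebra K A]
    [AddCommGroup V] [Module K V] [FiniteDimensional K V]
    (Q : QuasiHopf K A) (π : A →ₐ[K] Module.End K V)
    (u u' : A) (huu' : u * u' = 1) (hu'u : u' * u = 1)
    (htrace : ∀ a : A, Q.S (Q.S a) = u * a * u')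
    (S' : A →ₗ[K] A) (hS'l : ∀ a : A, S' (Q.S a) = a)
    (hS'r : ∀ a : A, Q.S (S' a) = a) :
    ∀ a b : A,
      LinearMap.trace K V (π (u * S' Q.α * QH.ad Q.Δ Q.S a b)) =
        Q.ε a * LinearMap.trace K V (π (u * S' Q.α * b)) := by
  intro a b
  have hSu : ∀ y : A, Q.S y * u = u * S' y := by
    intro y
    have h := htrace (S' y)
    rw [hS'r] at h
    calc Q.S y * u = u * S' y * u' * u := by rw [← h]
      _ = u * S' y := by rw [mul_assoc, hu'u, mul_one]
  have hS'mul : ∀ p q : A, S' (p * q) = S' q * S' p := by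
    intro p q
    have h : Q.S (S' q * S' p) = p * q := by rw [Q.S_mul, hS'r, hS'r]
    rw [← h, hS'l]
  have key : ∀ t : A ⊗[K] A,
      LinearMap.trace K V (π (u * S' Q.α * QH.adE Q.S b t)) =
      LinearMap.trace K V (π (u * S' (QH.antiAdE Q.S Q.α t) * b)) := by
    intro t
    induction t using TensorProduct.induction_on with
    | zero => simp [QH.adE, QH.antiAdE]
    | tmul x y =>
        have hl : QH.adE Q.S b (x ⊗ₜ[K] y) = x * (b * Q.S y) := by
          simp [QH.adE]
        have hr : QH.antiAdE Q.S Q.α (x ⊗ₜ[K] y) = Q.S x * Q.α * y := by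
          simp [QH.antiAdE]
        rw [hl, hr]
        have e1 : u * S' Q.α * (x * (b * Q.S y)) =
            (u * S' Q.α * x * b) * Q.S y := by
          simp only [mul_assoc]
        have e2 : S' (Q.S x * Q.α * y) = S' y * (S' Q.α * x) := by
          rw [hS'mul, hS'mul, hS'l]
        rw [e1, e2]
        have e3 : Q.S y * (u * S' Q.α * x * b) =
            u * (S' y * (S' Q.α * x)) * b := by
          calc Q.S y * (u * S' Q.α * x * b)
              = (Q.S y * u) * (S' Q.α * (x * b)) := by simp only [mul_assoc]
            _ = (u * S' y) * (S' Q.α * (x * b)) := by rw [hSu]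
            _ = u * (S' y * (S' Q.α * x)) * b := by simp only [mul_assoc]
        rw [map_mul, LinearMap.trace_mul_comm, ← map_mul, e3]
    | add s t hs ht =>
        have h1 : QH.adE Q.S b (s + t) = QH.adE Q.S b s + QH.adE Q.S b t := by
          simp [QH.adE]
        have h2 : QH.antiAdE Q.S Q.α (s + t) =
            QH.antiAdE Q.S Q.α s + QH.antiAdE Q.S Q.α t := by
          simp [QH.antiAdE]
        rw [h1, h2, map_add, mul_add, mul_add, add_mul, map_add, map_add, hs, ht]
        rw [map_add, map_add]
  rw [QH.ad, key (Q.Δ a), Q.antipode_α a, map_smul]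
  rw [mul_smul_comm, smul_mul_assoc, map_smul, map_smul, smul_eq_mul]
end
end
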